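/- arXiv:1909.11219 — 8 statements merged into one kernel-verified Lean document; each statement's English description precedes it below -/
import Mathlib

section
/- Milgrom–Segal envelope theorem (refined form): Under the basic assumptions, every optimal decision rule X : [0,1] → 𝒳 satisfies the envelope formula. -/
open MeasureTheory Set Filter intervalIntegral
open scoped Topology

/-- A family `{φ x}` of functions `[0,1] → ℝ` is *absolutely equi-continuous* iff the family
of divided-difference suprema `t ↦ sup_x |(φ x (t+m) − φ x t)/m|` (for `m > 0`, each defined on
`{t ∈ [0,1] : t + m ∈ [0,1]}`) is uniformly integrable. -/
def AbsolutelyEquicontinuous {𝒳 : Type*} (φ : 𝒳 → ℝ → ℝ) : Prop :=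
  ∀ ε > (0 : ℝ), ∃ δ > (0 : ℝ), ∀ T : Set ℝ, IsOpen T → T ⊆ Icc 0 1 →
    volume T < ENNReal.ofReal δ → ∀ m : ℝ, 0 < m →
      ∫⁻ t in T ∩ {t : ℝ | t ∈ Icc (0:ℝ) 1 ∧ t + m ∈ Icc (0:ℝ) 1},
        ⨆ x, ENNReal.ofReal |(φ x (t + m) - φ x t) / m| < ENNReal.ofReal ε

/-!
By optimality, `f (X s) t - f (X s) s ≤ V t - V s ≤ f (X t) t - f (X t) s` for the value function
`V t = f (X t) t`, so every increment of `V` is bounded by an increment of a single `f x`. Such an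
increment `f x b - f x a` is the limit as `m → 0⁺` of the integral over `[a, b - m]` of the forward
difference quotient of `f x`, which is dominated by the supremum over `x` of these quotients. Their
uniform integrability therefore makes `V` absolutely continuous on `[0,1]`. Where `V` is
differentiable inside `(0,1)`, `V - f (X s)` has a minimum at `s`, so `V' s = f₂ (X s) s`, and the
fundamental theorem of calculus for absolutely continuous functions gives the envelope formula.
-/

lemma dist_eq_abs_max_sub_min (g : ℝ → ℝ) (p q : ℝ) :
    dist (g p) (g q) = |g (max p q) - g (min p q)| := by
  rcases le_total p q with h | h
  · simp [h, Real.dist_eq, abs_sub_comm]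
  · simp [h, Real.dist_eq]

-- The upper limit `max a (b - m)` keeps `u + m ≤ b` and never drops below `a`.
theorem tendsto_integral_forwardQuotient {φ : ℝ → ℝ} {a b : ℝ} (hab : a ≤ b)
    (hφ : ContinuousOn φ (Icc a b)) :
    Tendsto (fun m => ∫ u in a..max a (b - m), (φ (u + m) - φ u) / m) (𝓝[>] 0)
      (𝓝 (φ b - φ a)) := by
  rcases hab.eq_or_lt with rfl | hab
  · refine tendsto_const_nhds.congr' ?_
    filter_upwards [self_mem_nhdsWithin] with m (hm : 0 < m)
    simp [max_eq_left (by linarith : a - m ≤ a)]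
  -- Extended continuously to `ℝ`, `φ` has a primitive that is differentiable at `a` and `b`.
  set ψ := IccExtend hab.le ((Icc a b).domRestrict φ)
  have hψφ : EqOn ψ φ (Icc a b) := fun u hu => IccExtend_of_mem _ _ hu
  have hψ : Continuous ψ := hφ.domRestrict.Icc_extend'
  set F := fun u => ∫ v in a..u, ψ v
  have hF (u : ℝ) : HasDerivAt F (ψ u) u := (hψ.integral_hasStrictDerivAt a u).hasDerivAt
  have hFint (c d : ℝ) : ∫ v in c..d, ψ v = F d - F c :=
    (intervalIntegral.integral_interval_sub_left (hψ.intervalIntegrable a d)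
      (hψ.intervalIntegrable a c)).symm
  have key : ∀ m ∈ Ioo 0 (b - a), ∫ u in a..max a (b - m), (φ (u + m) - φ u) / m
      = (-m)⁻¹ * (F (b + -m) - F b) - m⁻¹ * (F (a + m) - F a) := by
    rintro m ⟨hm, hmb⟩
    rw [max_eq_right (by linarith)]
    have hφψ : EqOn (fun u => (φ (u + m) - φ u) / m) (fun u => (ψ (u + m) - ψ u) / m)
        (uIcc a (b - m)) := by
      intro u hu
      rw [uIcc_of_le (by linarith)] at hu
      have h₁ : u ∈ Icc a b := ⟨hu.1, by linarith [hu.2]⟩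
      have h₂ : u + m ∈ Icc a b := ⟨by linarith [hu.1], by linarith [hu.2]⟩
      simp only [hψφ h₁, hψφ h₂]
    rw [intervalIntegral.integral_congr hφψ, intervalIntegral.integral_div,
      intervalIntegral.integral_sub
        ((by fun_prop : Continuous fun u => ψ (u + m)).intervalIntegrable _ _)
        (hψ.intervalIntegrable _ _),
      intervalIntegral.integral_comp_add_right ψ, hFint, hFint, sub_add_cancel,
      ← sub_eq_add_neg]
    field_simp
    ring
  rw [← hψφ ⟨hab.le, le_rfl⟩, ← hψφ ⟨le_rfl, hab.le⟩]
  have hneg : Tendsto Neg.neg (𝓝[>] (0:ℝ)) (𝓝[<] 0) := by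
    simpa using tendsto_neg_nhdsGT_neg (a := (0:ℝ))
  refine (((hF b).tendsto_slope_zero_left.comp hneg).sub
    (hF a).tendsto_slope_zero_right).congr' ?_
  filter_upwards [Ioo_mem_nhdsGT (sub_pos.2 hab)] with m hm
  simp [key m hm]

theorem DifferentiableAt.hasDerivAt_of_eventually_le {g V : ℝ → ℝ} {s g' : ℝ}
    (hV : DifferentiableAt ℝ V s) (hg : HasDerivAt g g' s) (hle : g ≤ᶠ[𝓝 s] V)
    (heq : g s = V s) :
    HasDerivAt V g' s := by
  have hmin : IsLocalMin (V - g) s := by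
    filter_upwards [hle] with u hu
    simp only [Pi.sub_apply, heq, sub_self, sub_nonneg, hu]
  have h := hmin.hasDerivAt_eq_zero (hV.hasDerivAt.sub hg)
  rw [← sub_eq_zero.1 h]
  exact hV.hasDerivAt

section

variable {𝒳 : Type*}

lemma exists_dist_le_of_forall_le {α : Type*} {g : 𝒳 → α → ℝ} {Y : α → 𝒳} {p q : α}
    (hp : ∀ x, g x p ≤ g (Y p) p) (hq : ∀ x, g x q ≤ g (Y q) q) :
    ∃ y, dist (g (Y p) p) (g (Y q) q) ≤ dist (g y p) (g y q) := by
  have h := abs_le_max_abs_abs (b := g (Y p) p - g (Y q) q)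
    (by linarith [hp (Y q)] : g (Y q) p - g (Y q) q ≤ _)
    (by linarith [hq (Y p)] : _ ≤ g (Y p) p - g (Y p) q)
  simp only [Real.dist_eq]
  rcases max_choice |g (Y q) p - g (Y q) q| |g (Y p) p - g (Y p) q| with h' | h'
  · exact ⟨Y q, h'.symm ▸ h⟩
  · exact ⟨Y p, h'.symm ▸ h⟩

lemma enorm_integral_forwardQuotient_le (φ : 𝒳 → ℝ → ℝ) (x : 𝒳) {a b m : ℝ}
    (ha : 0 ≤ a) (hb : b ≤ 1) (hm : 0 < m) :
    ‖∫ u in a..max a (b - m), (φ x (u + m) - φ x u) / m‖ₑ ≤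
      ∫⁻ t in Ioo a b ∩ {t : ℝ | t ∈ Icc (0:ℝ) 1 ∧ t + m ∈ Icc (0:ℝ) 1},
        ⨆ y, ENNReal.ofReal |(φ y (t + m) - φ y t) / m| := by
  rw [integral_of_le (le_max_left _ _)]
  calc _ ≤ ∫⁻ u in Ioc a (max a (b - m)), ‖(φ x (u + m) - φ x u) / m‖ₑ :=
        enorm_integral_le_lintegral_enorm _
    _ ≤ ∫⁻ u in Ioc a (max a (b - m)), ⨆ y, ENNReal.ofReal |(φ y (u + m) - φ y u) / m| :=
        lintegral_mono fun u => (Real.enorm_eq_ofReal_abs _).trans_le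
          (le_iSup (fun y => ENNReal.ofReal |(φ y (u + m) - φ y u) / m|) x)
    _ ≤ _ := by
        refine lintegral_mono_set fun u ⟨hau, hub⟩ => ?_
        have hub : u ≤ b - m := (le_max_iff.1 hub).resolve_left hau.not_ge
        exact ⟨⟨hau, by linarith⟩, ⟨by linarith, by linarith⟩, ⟨by linarith, by linarith⟩⟩

variable {f f₂ : 𝒳 → ℝ → ℝ} {X : ℝ → 𝒳}

theorem AbsolutelyEquicontinuous.sum_dist_le (hequi : AbsolutelyEquicontinuous f)
    (hcont : ∀ x, ContinuousOn (f x) (Icc 0 1)) :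
    ∀ ε > (0 : ℝ), ∃ δ > (0 : ℝ), ∀ E ∈ AbsolutelyContinuousOnInterval.disjWithin 0 1,
      ∑ i ∈ Finset.range E.1, dist (E.2 i).1 (E.2 i).2 < δ → ∀ x : ℕ → 𝒳,
      ∑ i ∈ Finset.range E.1, dist (f (x i) (E.2 i).1) (f (x i) (E.2 i).2) ≤ ε := by
  intro ε hε
  obtain ⟨δ, hδ, hT⟩ := hequi ε hε
  refine ⟨δ, hδ, fun ⟨n, I⟩ ⟨hI, hdisj⟩ hlen x => ?_⟩
  simp only [dist_eq_abs_max_sub_min]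
  set a := fun i => min (I i).1 (I i).2
  set b := fun i => max (I i).1 (I i).2
  have hab : ∀ i ∈ Finset.range n, 0 ≤ a i ∧ a i ≤ b i ∧ b i ≤ 1 := by
    intro i hi
    have hmem := hI i hi
    simp only [uIcc_of_le zero_le_one, mem_Icc] at hmem
    exact ⟨le_min hmem.1.1 hmem.2.1, min_le_max, max_le hmem.1.2 hmem.2.2⟩
  set T := ⋃ i ∈ Finset.range n, Ioo (a i) (b i)
  have hTsub : T ⊆ Icc 0 1 := iUnion₂_subset fun i hi =>
    Ioo_subset_Icc_self.trans (Icc_subset_Icc (hab i hi).1 (hab i hi).2.2)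
  have hTvol : volume T < ENNReal.ofReal δ := calc
    volume T ≤ ∑ i ∈ Finset.range n, volume (Ioo (a i) (b i)) :=
      measure_biUnion_finset_le _ _
    _ = ENNReal.ofReal (∑ i ∈ Finset.range n, dist (I i).1 (I i).2) := by
      rw [ENNReal.ofReal_sum_of_nonneg fun _ _ => dist_nonneg]
      simp [a, b, Real.volume_Ioo, max_sub_min_eq_abs', Real.dist_eq]
    _ < _ := (ENNReal.ofReal_lt_ofReal_iff hδ).2 hlen
  have hbound (m : ℝ) (hm : 0 < m) :
      ∑ i ∈ Finset.range n,
        |∫ u in a i..max (a i) (b i - m), (f (x i) (u + m) - f (x i) u) / m| < ε := by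
    have hS : MeasurableSet {t : ℝ | t ∈ Icc (0:ℝ) 1 ∧ t + m ∈ Icc (0:ℝ) 1} :=
      measurableSet_Icc.inter (measurableSet_Icc.preimage (measurable_add_const m))
    rw [← ENNReal.ofReal_lt_ofReal_iff hε, ENNReal.ofReal_sum_of_nonneg fun _ _ => abs_nonneg _]
    simp only [← Real.enorm_eq_ofReal_abs]
    calc _ ≤ ∑ i ∈ Finset.range n,
          ∫⁻ t in Ioo (a i) (b i) ∩ {t : ℝ | t ∈ Icc (0:ℝ) 1 ∧ t + m ∈ Icc (0:ℝ) 1},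
            ⨆ y, ENNReal.ofReal |(f y (t + m) - f y t) / m| :=
          Finset.sum_le_sum fun i hi =>
            enorm_integral_forwardQuotient_le f (x i) (hab i hi).1 (hab i hi).2.2 hm
      _ = ∫⁻ t in T ∩ {t : ℝ | t ∈ Icc (0:ℝ) 1 ∧ t + m ∈ Icc (0:ℝ) 1},
            ⨆ y, ENNReal.ofReal |(f y (t + m) - f y t) / m| := by
          rw [iUnion₂_inter, lintegral_biUnion_finset
            (hdisj.mono fun i => inter_subset_left.trans Ioo_subset_Ioc_self)
            fun _ _ => measurableSet_Ioo.inter hS]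
      _ < _ := hT T (isOpen_biUnion fun _ _ => isOpen_Ioo) hTsub hTvol m hm
  have hlim := tendsto_finsetSum (Finset.range n) fun i hi =>
    (tendsto_integral_forwardQuotient (hab i hi).2.1
      ((hcont (x i)).mono (Icc_subset_Icc (hab i hi).1 (hab i hi).2.2))).abs
  exact le_of_tendsto hlim (eventually_nhdsWithin_of_forall fun m hm => (hbound m hm).le)

theorem absolutelyContinuousOnInterval_value (hequi : AbsolutelyEquicontinuous f)
    (hcont : ∀ x, ContinuousOn (f x) (Icc 0 1))
    (hopt : ∀ t ∈ Icc (0:ℝ) 1, ∀ x : 𝒳, f x t ≤ f (X t) t) :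
    AbsolutelyContinuousOnInterval (fun t => f (X t) t) 0 1 := by
  rw [absolutelyContinuousOnInterval_iff]
  intro ε hε
  obtain ⟨δ, hδ, hsum⟩ := hequi.sum_dist_le hcont (ε / 2) (half_pos hε)
  refine ⟨δ, hδ, fun E hE hlen => ?_⟩
  have hx (i : ℕ) : ∃ y, i ∈ Finset.range E.1 →
      dist (f (X (E.2 i).1) (E.2 i).1) (f (X (E.2 i).2) (E.2 i).2)
        ≤ dist (f y (E.2 i).1) (f y (E.2 i).2) := by
    by_cases hi : i ∈ Finset.range E.1
    · have hmem := hE.1 i hi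
      rw [uIcc_of_le zero_le_one] at hmem
      obtain ⟨y, hy⟩ := exists_dist_le_of_forall_le (hopt _ hmem.1) (hopt _ hmem.2)
      exact ⟨y, fun _ => hy⟩
    · exact ⟨X 0, fun h => absurd h hi⟩
  choose x hx using hx
  calc _ ≤ ∑ i ∈ Finset.range E.1, dist (f (x i) (E.2 i).1) (f (x i) (E.2 i).2) :=
        Finset.sum_le_sum fun i hi => hx i hi
    _ ≤ ε / 2 := hsum E hE hlen x
    _ < ε := half_lt_self hε

theorem ae_deriv_value_eq
    (hdiff : ∀ x : 𝒳, ∀ t ∈ Icc (0:ℝ) 1, HasDerivWithinAt (f x) (f₂ x t) (Icc (0:ℝ) 1) t)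
    (hopt : ∀ t ∈ Icc (0:ℝ) 1, ∀ x : 𝒳, f x t ≤ f (X t) t)
    (hV : AbsolutelyContinuousOnInterval (fun t => f (X t) t) 0 1) :
    ∀ᵐ s, s ∈ Icc (0:ℝ) 1 → deriv (fun t => f (X t) t) s = f₂ (X s) s := by
  have hends : ∀ᵐ s : ℝ, s ∉ ({0, 1} : Set ℝ) := (toFinite _).countable.ae_notMem volume
  filter_upwards [hV.ae_differentiableAt, hends] with s hdiffV hs hmem
  simp only [mem_insert_iff, mem_singleton_iff, not_or] at hs
  have hIcc : Icc (0:ℝ) 1 ∈ 𝓝 s :=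
    Icc_mem_nhds (hmem.1.lt_of_ne' hs.1) (hmem.2.lt_of_ne hs.2)
  refine ((hdiffV (uIcc_of_le (zero_le_one' ℝ) ▸ hmem)).hasDerivAt_of_eventually_le
    ((hdiff (X s) s hmem).hasDerivAt hIcc) ?_ rfl).deriv
  filter_upwards [hIcc] with u hu using hopt u hu (X s)

end

theorem milgrom_segal_envelope_general
    {𝒳 : Type*} (f f₂ : 𝒳 → ℝ → ℝ)
    (hdiff : ∀ x : 𝒳, ∀ t ∈ Icc (0:ℝ) 1, HasDerivWithinAt (f x) (f₂ x t) (Icc (0:ℝ) 1) t)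
    (hequi : AbsolutelyEquicontinuous f)
    (X : ℝ → 𝒳)
    (hopt : ∀ t ∈ Icc (0:ℝ) 1, ∀ x : 𝒳, f x t ≤ f (X t) t) :
    IntegrableOn (fun s => f₂ (X s) s) (Icc (0:ℝ) 1) volume ∧
      ∀ t ∈ Icc (0:ℝ) 1, f (X t) t = f (X 0) 0 + ∫ s in (0:ℝ)..t, f₂ (X s) s := by
  have hV := absolutelyContinuousOnInterval_value hequi
    (fun x t ht => (hdiff x t ht).continuousWithinAt) hopt
  have hderiv := ae_deriv_value_eq hdiff hopt hV
  refine ⟨?_, fun t ht => ?_⟩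
  · exact ((intervalIntegrable_iff_integrableOn_Icc_of_le zero_le_one).1
      hV.intervalIntegrable_deriv).congr_fun_ae
        ((ae_restrict_iff' measurableSet_Icc).2 hderiv)
  · have hsub : uIcc 0 t ⊆ Icc 0 1 := by
      rw [uIcc_of_le ht.1]
      exact Icc_subset_Icc_right ht.2
    have hFTC := (hV.mono (c := 0) (d := t)
      (by rwa [uIcc_of_le zero_le_one])).integral_deriv_eq_sub
    rw [intervalIntegral.integral_congr_ae (hderiv.mono fun s hs hst =>
      hs (hsub (uIoc_subset_uIcc hst)))] at hFTC
    linarith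

/-- **Milgrom–Segal envelope theorem (refined form).** Under the basic assumptions, every
optimal decision rule `X : [0,1] → 𝒳` satisfies the envelope formula
`f (X t) t = f (X 0) 0 + ∫₀ᵗ f₂ (X s) s ds` for every `t ∈ [0,1]`. -/
theorem milgrom_segal_envelope
    {𝒳 : Type*} [Nonempty 𝒳] (f f₂ : 𝒳 → ℝ → ℝ)
    (hdiff : ∀ x : 𝒳, ∀ t ∈ Icc (0:ℝ) 1, HasDerivWithinAt (f x) (f₂ x t) (Icc (0:ℝ) 1) t)
    (hequi : AbsolutelyEquicontinuous f)
    (X : ℝ → 𝒳)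
    (hopt : ∀ t ∈ Icc (0:ℝ) 1, ∀ x : 𝒳, f x t ≤ f (X t) t) :
    IntegrableOn (fun s => f₂ (X s) s) (Icc (0:ℝ) 1) volume ∧
      ∀ t ∈ Icc (0:ℝ) 1, f (X t) t = f (X 0) 0 + ∫ s in (0:ℝ)..t, f₂ (X s) s :=
  milgrom_segal_envelope_general f f₂ hdiff hequi X hopt
end

section
/- Housekeeping lemma: Under the basic and classical assumptions, a Lipschitz continuous decision rule X : [0,1] → 𝒳 satisfies the outer first-order condition if and only if it satisfies the first-order condition a.e. -/
/-! Write `φ t u = f (X u) t`. By the mean value theorem on the convex set `𝒳` and the Lipschitz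
continuity of `X`, every `φ t` is Lipschitz with one constant, so differentiating under the integral
sign gives `d/dm ∫_r^t φ s (s + m) ds = ∫_r^t D` at `m = 0`, where `D s = ∂ᵤφ s s`. By Rademacher's
theorem and the chain rule, `D t` is also the derivative of `m ↦ φ t (t + m)` at `0` for a.e. `t`.
So the outer condition says that `D` integrates to zero over every subinterval of `(0,1)`, which by
the Lebesgue differentiation theorem means `D = 0` a.e., i.e. the first-order condition a.e. -/

open MeasureTheory Set Filter intervalIntegral

open scoped NNReal Topology Interval

lemma ae_eq_zero_of_forall_intervalIntegral_eq_zero {E : Type*} [NormedAddCommGroup E]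
    [NormedSpace ℝ E] [CompleteSpace E] {D : ℝ → E} {a b : ℝ}
    (hD : IntervalIntegrable D volume a b)
    (h : ∀ r ∈ Ioo a b, ∀ t ∈ Ioo a b, ∫ s in r..t, D s = 0) :
    ∀ᵐ t, t ∈ Ioo a b → D t = 0 := by
  filter_upwards [hD.ae_hasDerivAt_integral] with x hx hxab
  have hx_mem : x ∈ uIcc a b := Icc_subset_uIcc (Ioo_subset_Icc_self hxab)
  have hconst : HasDerivAt (fun y => ∫ s in x..y, D s) 0 x :=
    (hasDerivAt_const x 0).congr_of_eventuallyEq <|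
      eventually_of_mem (isOpen_Ioo.mem_nhds hxab) fun y hy => h x hxab y hy
  exact (hx hx_mem x hx_mem).unique hconst

lemma uIoc_subset_Ioo {a b r t : ℝ} (hr : r ∈ Ioo a b) (ht : t ∈ Ioo a b) :
    Ι r t ⊆ Ioo a b :=
  uIoc_subset_uIcc.trans (ordConnected_Ioo.uIcc_subset hr ht)

lemma DifferentiableAt.hasDerivAt_comp_const_add_zero {E : Type*} [NormedAddCommGroup E]
    [NormedSpace ℝ E] {h : ℝ → E} {t : ℝ}
    (hd : DifferentiableAt ℝ h t) : HasDerivAt (fun m => h (t + m)) (deriv h t) 0 :=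
  HasDerivAt.comp_const_add t 0 (by simpa using hd.hasDerivAt)

section Shift

variable {g : ℝ → ℝ → ℝ} {C : ℝ≥0}

lemma measurable_deriv_diag (hg : Continuous (Function.uncurry g)) :
    Measurable fun t => deriv (g t) t :=
  (measurable_deriv_with_param hg).comp (measurable_id.prodMk measurable_id)

lemma intervalIntegrable_deriv_diag (hg : Continuous (Function.uncurry g))
    (hlip : ∀ t, LipschitzWith C (g t)) (r t : ℝ) :
    IntervalIntegrable (fun s => deriv (g s) s) volume r t :=
  intervalIntegrable_const.mono_fun' (measurable_deriv_diag hg).aestronglyMeasurable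
    (Eventually.of_forall fun s => norm_deriv_le_of_lipschitz (hlip s))

lemma hasDerivAt_intervalIntegral_shift (hg : Continuous (Function.uncurry g))
    (hlip : ∀ t, LipschitzWith C (g t)) {r t : ℝ}
    (hdiff : ∀ᵐ s, s ∈ Ι r t → DifferentiableAt ℝ (g s) s) :
    HasDerivAt (fun m => ∫ s in r..t, g s (s + m)) (∫ s in r..t, deriv (g s) s) 0 := by
  have hcont : ∀ m, Continuous fun s => g s (s + m) := fun m =>
    hg.comp (continuous_id.prodMk (continuous_id.add continuous_const))
  refine (hasDerivAt_integral_of_dominated_loc_of_lip (bound := fun _ => (C : ℝ)) univ_mem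
    (Eventually.of_forall fun m => (hcont m).aestronglyMeasurable)
    ((hcont 0).intervalIntegrable r t)
    (measurable_deriv_diag hg).aestronglyMeasurable ?_ intervalIntegrable_const ?_).2
  · refine Eventually.of_forall fun s _ => ?_
    simpa only [Real.nnabs_coe, mul_one, Function.comp_def] using
      ((hlip s).comp (isometry_add_left s).lipschitz).lipschitzOnWith (s := univ)
  · filter_upwards [hdiff] with s hs hsrt
    exact (hs hsrt).hasDerivAt_comp_const_add_zero

theorem forall_hasDerivAt_intervalIntegral_shift_iff_ae (hg : Continuous (Function.uncurry g))
    (hlip : ∀ t, LipschitzWith C (g t)) {a b : ℝ}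
    (hdiff : ∀ᵐ t, t ∈ Ioo a b → DifferentiableAt ℝ (g t) t) :
    (∀ r ∈ Ioo a b, ∀ t ∈ Ioo a b, HasDerivAt (fun m => ∫ s in r..t, g s (s + m)) 0 0) ↔
      ∀ᵐ t ∂volume.restrict (Ioo a b), HasDerivAt (fun m => g t (t + m)) 0 0 := by
  have hshift : ∀ r ∈ Ioo a b, ∀ t ∈ Ioo a b, HasDerivAt (fun m => ∫ s in r..t, g s (s + m))
      (∫ s in r..t, deriv (g s) s) 0 := fun r hr t ht =>
    hasDerivAt_intervalIntegral_shift hg hlip <| hdiff.mono fun s hs hsrt =>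
      hs (uIoc_subset_Ioo hr ht hsrt)
  have hpoint : ∀ᵐ t, t ∈ Ioo a b → HasDerivAt (fun m => g t (t + m)) (deriv (g t) t) 0 :=
    hdiff.mono fun t ht htab => (ht htab).hasDerivAt_comp_const_add_zero
  rw [ae_restrict_iff' measurableSet_Ioo]
  constructor
  · intro houter
    have hzero := ae_eq_zero_of_forall_intervalIntegral_eq_zero
      (intervalIntegrable_deriv_diag hg hlip a b)
      fun r hr t ht => (hshift r hr t ht).unique (houter r hr t ht)
    filter_upwards [hpoint, hzero] with t hderiv hzero htab
    simpa only [hzero htab] using hderiv htab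
  · intro hae r hr t ht
    have hzero : ∫ s in r..t, deriv (g s) s = 0 := by
      refine (intervalIntegral.integral_congr_ae ?_).trans integral_zero
      filter_upwards [hae, hpoint] with s hs hderiv hsrt
      exact (hderiv (uIoc_subset_Ioo hr ht hsrt)).unique (hs (uIoc_subset_Ioo hr ht hsrt))
    simpa only [hzero] using hshift r hr t ht

end Shift

lemma eventually_add_mem_nhds_zero {s : Set ℝ} {t : ℝ} (hs : s ∈ 𝓝 t) : ∀ᶠ m in 𝓝 0, t + m ∈ s :=
  ((continuous_const_add t).tendsto' 0 t (add_zero t)).eventually_mem hs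

theorem forall_hasDerivAt_intervalIntegral_shift_iff_ae_of_lipschitzOnWith {φ : ℝ → ℝ → ℝ}
    {C : ℝ≥0} {a b : ℝ} (hab : a ≤ b) (hcont : ∀ u ∈ Icc a b, ContinuousOn (φ · u) (Icc a b))
    (hlip : ∀ t ∈ Icc a b, LipschitzOnWith C (φ t) (Icc a b))
    (hdiff : ∀ᵐ t, t ∈ Ioo a b → DifferentiableAt ℝ (φ t) t) :
    (∀ r ∈ Ioo a b, ∀ t ∈ Ioo a b, HasDerivAt (fun m => ∫ s in r..t, φ s (s + m)) 0 0) ↔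
      ∀ᵐ t ∂volume.restrict (Ioo a b), HasDerivAt (fun m => φ t (t + m)) 0 0 := by
  -- Extending `φ` through the projection onto `[a, b]` makes it jointly continuous on `ℝ × ℝ`.
  set p : ℝ → ℝ := fun x => projIcc a b hab x
  have hp : ∀ x ∈ Icc a b, p x = x := fun x hx => congrArg Subtype.val (projIcc_of_mem hab hx)
  set g : ℝ → ℝ → ℝ := fun t u => φ (p t) (p u)
  have hglip : ∀ t, LipschitzWith C (g t) := fun t => by
    have h := (hlip _ (projIcc a b hab t).2).to_restrict.comp (LipschitzWith.projIcc hab)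
    rw [mul_one] at h
    exact h
  have hgcont : Continuous (Function.uncurry g) :=
    continuous_prod_of_continuous_lipschitzWith' _ C hglip fun u =>
      (hcont _ (projIcc a b hab u).2).comp_continuous
        (continuous_subtype_val.comp continuous_projIcc) fun t => (projIcc a b hab t).2
  have hg : ∀ t ∈ Icc a b, ∀ u ∈ Icc a b, g t u = φ t u := fun t ht u hu => by
    simp only [g, hp t ht, hp u hu]
  have hnear : ∀ t ∈ Ioo a b, ∀ᶠ m in 𝓝 0, t + m ∈ Icc a b := fun t ht =>
    eventually_add_mem_nhds_zero (Icc_mem_nhds ht.1 ht.2)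
  have hgdiff : ∀ᵐ t, t ∈ Ioo a b → DifferentiableAt ℝ (g t) t := by
    filter_upwards [hdiff] with t ht htab
    refine (ht htab).congr_of_eventuallyEq ?_
    filter_upwards [Icc_mem_nhds htab.1 htab.2] with u hu
    exact hg t (Ioo_subset_Icc_self htab) u hu
  have houter : ∀ r ∈ Ioo a b, ∀ t ∈ Ioo a b, (fun m => ∫ s in r..t, g s (s + m)) =ᶠ[𝓝 0]
      fun m => ∫ s in r..t, φ s (s + m) := fun r hr t ht => by
    filter_upwards [hnear r hr, hnear t ht] with m hrm htm
    refine integral_congr fun s hs => hg s ?_ (s + m) ?_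
    · exact ordConnected_Icc.uIcc_subset (Ioo_subset_Icc_self hr) (Ioo_subset_Icc_self ht) hs
    · refine ordConnected_Icc.uIcc_subset hrm htm ?_
      exact image_add_const_uIcc m r t ▸ mem_image_of_mem _ hs
  have hinner : ∀ t ∈ Ioo a b, (fun m => g t (t + m)) =ᶠ[𝓝 0] fun m => φ t (t + m) :=
    fun t ht => (hnear t ht).mono fun m hm => hg t (Ioo_subset_Icc_self ht) _ hm
  have key := forall_hasDerivAt_intervalIntegral_shift_iff_ae hgcont hglip hgdiff
  rw [ae_restrict_iff' measurableSet_Ioo] at key ⊢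
  refine Iff.trans ?_ (key.trans ?_)
  · exact forall₂_congr fun r hr => forall₂_congr fun t ht => (houter r hr t ht).hasDerivAt_iff.symm
  · exact eventually_congr (Eventually.of_forall fun t =>
      forall_congr' fun ht => (hinner t ht).hasDerivAt_iff)

theorem housekeeping_lemma_general
    {n : ℕ} {𝒳 : Set (EuclideanSpace ℝ (Fin n))} (hconv : Convex ℝ 𝒳)
    (f : EuclideanSpace ℝ (Fin n) → ℝ → ℝ)
    (hdiff : ∀ x ∈ 𝒳, DifferentiableOn ℝ (f x) (Icc (0:ℝ) 1))
    (f₁ : EuclideanSpace ℝ (Fin n) → ℝ → (EuclideanSpace ℝ (Fin n) →L[ℝ] ℝ))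
    (hf₁ : ∀ x ∈ 𝒳, ∀ t ∈ Icc (0:ℝ) 1, HasFDerivWithinAt (fun y => f y t) (f₁ x t) 𝒳 x)
    (hf₁bdd : ∃ K : ℝ, ∀ x ∈ 𝒳, ∀ t ∈ Icc (0:ℝ) 1, ‖f₁ x t‖ ≤ K)
    (X : ℝ → EuclideanSpace ℝ (Fin n))
    (hX𝒳 : ∀ t ∈ Icc (0:ℝ) 1, X t ∈ 𝒳)
    (hLip : ∃ L : NNReal, LipschitzOnWith L X (Icc (0:ℝ) 1)) :
    (∀ r ∈ Ioo (0:ℝ) 1, ∀ t ∈ Ioo (0:ℝ) 1,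
        HasDerivAt (fun m : ℝ => ∫ s in r..t, f (X (s + m)) s) 0 0) ↔
    (∀ᵐ t ∂(volume.restrict (Ioo (0:ℝ) 1)),
        HasDerivAt (fun m : ℝ => f (X (t + m)) t) 0 0) := by
  obtain ⟨K, hK⟩ := hf₁bdd
  obtain ⟨L, hL⟩ := hLip
  have hf_lip : ∀ t ∈ Icc (0:ℝ) 1, LipschitzOnWith K.toNNReal (fun y => f y t) 𝒳 := fun t ht =>
    hconv.lipschitzOnWith_of_nnnorm_hasFDerivWithin_le (fun x hx => hf₁ x hx t ht) fun x hx => by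
      rw [← norm_toNNReal]
      exact Real.toNNReal_le_toNNReal (hK x hx t ht)
  have hX_diff : ∀ᵐ t, t ∈ Ioo (0:ℝ) 1 → DifferentiableAt ℝ (fun u => f (X u) t) t := by
    filter_upwards [hL.ae_differentiableWithinAt_of_mem] with t hXt ht
    have htIcc := Ioo_subset_Icc_self ht
    exact ((hf₁ _ (hX𝒳 t htIcc) t htIcc).comp_hasDerivWithinAt t (hXt htIcc).hasDerivWithinAt
      hX𝒳).differentiableWithinAt.differentiableAt (Icc_mem_nhds ht.1 ht.2)
  exact forall_hasDerivAt_intervalIntegral_shift_iff_ae_of_lipschitzOnWith zero_le_one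
    (fun u hu => (hdiff _ (hX𝒳 u hu)).continuousOn)
    (fun t ht => (hf_lip t ht).comp hL hX𝒳) hX_diff

/-- **Housekeeping lemma.** Under the basic assumptions (differentiability of each `f x ·` on
`[0,1]` and absolute equi-continuity of the family) and the classical assumptions (`𝒳` a
convex subset of `ℝⁿ`, the action derivative `f₁` exists and is bounded, `X` Lipschitz
continuous), a decision rule `X : [0,1] → 𝒳` satisfies the outer first-order condition iff it
satisfies the first-order condition a.e. -/
theorem housekeeping_lemma
    {n : ℕ} {𝒳 : Set (EuclideanSpace ℝ (Fin n))} (hne : 𝒳.Nonempty) (hconv : Convex ℝ 𝒳)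
    (f : EuclideanSpace ℝ (Fin n) → ℝ → ℝ)
    (hdiff : ∀ x ∈ 𝒳, DifferentiableOn ℝ (f x) (Icc (0:ℝ) 1))
    (hequi : AbsolutelyEquicontinuous fun x : 𝒳 => f x.1)
    (f₁ : EuclideanSpace ℝ (Fin n) → ℝ → (EuclideanSpace ℝ (Fin n) →L[ℝ] ℝ))
    (hf₁ : ∀ x ∈ 𝒳, ∀ t ∈ Icc (0:ℝ) 1, HasFDerivWithinAt (fun y => f y t) (f₁ x t) 𝒳 x)
    (hf₁bdd : ∃ K : ℝ, ∀ x ∈ 𝒳, ∀ t ∈ Icc (0:ℝ) 1, ‖f₁ x t‖ ≤ K)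
    (X : ℝ → EuclideanSpace ℝ (Fin n))
    (hX𝒳 : ∀ t ∈ Icc (0:ℝ) 1, X t ∈ 𝒳)
    (hLip : ∃ L : NNReal, LipschitzOnWith L X (Icc (0:ℝ) 1)) :
    (∀ r ∈ Ioo (0:ℝ) 1, ∀ t ∈ Ioo (0:ℝ) 1,
        HasDerivAt (fun m : ℝ => ∫ s in r..t, f (X (s + m)) s) 0 0) ↔
    (∀ᵐ t ∂(volume.restrict (Ioo (0:ℝ) 1)),
        HasDerivAt (fun m : ℝ => f (X (t + m)) t) 0 0) :=
  housekeeping_lemma_general hconv f hdiff f₁ hf₁ hf₁bdd X hX𝒳 hLip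
end

section
/- Implementability theorem: If the partially ordered outcome set 𝒴 is regular, the payoff f is regular, and f satisfies the outer Spence–Mirrlees condition, then every increasing allocation Y : [0,1] → 𝒴 is implementable. -/
open MeasureTheory Set Filter intervalIntegral

/-- The order topology on a partially ordered set: generated by the open order rays
`{y' | y' < y}` and `{y' | y < y'}`. -/
def orderRayTopology (Y : Type*) [PartialOrder Y] : TopologicalSpace Y :=
  TopologicalSpace.generateFrom
    ({S : Set Y | ∃ y : Y, S = {y' | y' < y}} ∪ {S : Set Y | ∃ y : Y, S = {y' | y < y'}})

/-- The outcome space `𝒴` is *regular*: order-dense-in-itself, countably chain-complete, and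
chain-separable. -/
def OutcomeRegular (Y : Type*) [PartialOrder Y] : Prop :=
  (∀ a a' : Y, a < a' → ∃ b : Y, a < b ∧ b < a') ∧
  (∀ C : Set Y, IsChain (· ≤ ·) C → C.Countable → C.Nonempty →
    (BddBelow C → ∃ i : Y, IsGLB C i) ∧ (BddAbove C → ∃ s : Y, IsLUB C s)) ∧
  (∀ C : Set Y, IsChain (· ≤ ·) C → ∃ B : Set Y, B.Countable ∧
    ∀ c ∈ C, ∀ c' ∈ C, c < c' → ∃ b ∈ B, c ≤ b ∧ b ≤ c')

/-- The payoff `f` is *regular*: the type derivative `f₃` exists (as a derivative on `[0,1]`)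
and is bounded, `p ↦ f₃ y p t` is continuous, and `f` is jointly continuous on `C × ℝ × [0,1]`
for every chain `C ⊆ 𝒴`, where `C` carries the relative topology inherited from the order
topology on `𝒴`. -/
def PayoffRegular {Y : Type*} [PartialOrder Y] (f f₃ : Y → ℝ → ℝ → ℝ) : Prop :=
  (∀ (y : Y) (p : ℝ), ∀ t ∈ Icc (0:ℝ) 1,
      HasDerivWithinAt (fun τ => f y p τ) (f₃ y p t) (Icc (0:ℝ) 1) t) ∧
  (∃ K : ℝ, ∀ (y : Y) (p : ℝ), ∀ t ∈ Icc (0:ℝ) 1, |f₃ y p t| ≤ K) ∧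
  (∀ (y : Y), ∀ t ∈ Icc (0:ℝ) 1, Continuous fun p => f₃ y p t) ∧
  (∀ C : Set Y, IsChain (· ≤ ·) C →
    letI : TopologicalSpace Y := orderRayTopology Y
    ContinuousOn (fun q : Y × ℝ × ℝ => f q.1 q.2.1 q.2.2) (C ×ˢ (univ : Set ℝ) ×ˢ Icc (0:ℝ) 1))

/-- `φ` is single-crossing on `S`. -/
def SingleCrossingOn (φ : ℝ → ℝ) (S : Set ℝ) : Prop :=
  ∀ n ∈ S, ∀ n' ∈ S, n < n' → (0 ≤ φ n → 0 ≤ φ n') ∧ (0 < φ n → 0 < φ n')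

/-- The marginal mimicking gain: `m ↦ (1/m)(∫_r^t f(Y(s+m),P(s+m),s+n) ds −
∫_r^t f(Y(s),P(s),s+n) ds)`. -/
noncomputable def mimickGain {Y : Type*} (f : Y → ℝ → ℝ → ℝ) (Ya : ℝ → Y) (P : ℝ → ℝ)
    (r t n : ℝ) : ℝ → ℝ := fun m =>
  ((∫ s in r..t, f (Ya (s + m)) (P (s + m)) (s + n)) -
    ∫ s in r..t, f (Ya s) (P s) (s + n)) / m

/-- The *outer Spence–Mirrlees condition*: for every increasing allocation `Ya`, every payment
schedule `P` and all `r < t` in `(0,1)`, the map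
`n ↦ limsup_{m→0}` of the marginal mimicking gain is single-crossing in `n`. -/
def OuterSpenceMirrlees {Y : Type*} [PartialOrder Y] (f : Y → ℝ → ℝ → ℝ) : Prop :=
  ∀ Ya : ℝ → Y, MonotoneOn Ya (Icc (0:ℝ) 1) → ∀ P : ℝ → ℝ,
    ∀ r ∈ Ioo (0:ℝ) 1, ∀ t ∈ Ioo (0:ℝ) 1, r < t →
      SingleCrossingOn
        (fun n => limsup (mimickGain f Ya P r t n) (nhdsWithin 0 {(0:ℝ)}ᶜ))
        (Icc (-r) (1 - t))

/-- `(Y,P)` is incentive-compatible, i.e. `P` implements the allocation `Y`. -/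
def Implementable {Y : Type*} (f : Y → ℝ → ℝ → ℝ) (Ya : ℝ → Y) : Prop :=
  ∃ P : ℝ → ℝ, ∀ r ∈ Icc (0:ℝ) 1, ∀ t ∈ Icc (0:ℝ) 1,
    f (Ya r) (P r) t ≤ f (Ya t) (P t) t

/-!
Payments are built from *attainable* utilities. Utility `0` is attainable at type `0`, and if `v`
is attainable at `a ≤ b`, then so is `mimicValue f Ya a v b`, the utility type `b` gets from the
contract of type `a` priced to give `a` exactly `v`. Type `t` is offered its own outcome priced to
give it `attainableSup f Ya t`, the supremum of the utilities attainable at `t`. A type `t`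
mimicking a lower type `r` gains nothing because attainability is closed under the step `r ↦ t`.
A type `t` mimicking a higher type `b` gains nothing by single-crossing differences: the contract
of `b` ties at `b` with the contract it was derived from, so it is worse for every lower type, and
by induction along the chain it is dominated at `t` by an attainable utility. The bound on the
type derivative keeps attainable utilities bounded.

Single-crossing differences come from the outer Spence–Mirrlees condition applied to two-step
allocations switching from `(y₀, p₀)` to `(y₁, p₁)` at `T`: their mimicking gain vanishes for
`m < 0` and is an average of `f y₁ p₁ - f y₀ p₀` over `[T + n - m, T + n]` for `m > 0`, so its
limsup is `max (f y₁ p₁ (T + n) - f y₀ p₀ (T + n)) 0`.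
-/

open scoped Topology

theorem Continuous.apply_csSup_le {α β : Type*} [ConditionallyCompleteLinearOrder α]
    [TopologicalSpace α] [OrderTopology α] [Preorder β] [TopologicalSpace β] [OrderClosedTopology β]
    {S : Set α} {g : α → β} {c : β} (hg : Continuous g)
    (hne : S.Nonempty) (hbdd : BddAbove S) (h : ∀ v ∈ S, g v ≤ c) : g (sSup S) ≤ c :=
  (isClosed_le hg continuous_const).closure_subset_iff.2 h (csSup_mem_closure hne hbdd)

theorem Antitone.continuous_of_surjective {α β : Type*} [LinearOrder α] [TopologicalSpace α]
    [OrderTopology α] [LinearOrder β] [TopologicalSpace β] [OrderTopology β] [DenselyOrdered β]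
    {g : α → β} (hg : Antitone g) (hs : Function.Surjective g) : Continuous g :=
  continuous_ofDual.comp
    (hg.dual_right.continuous_of_surjective (OrderDual.toDual.surjective.comp hs))

theorem limsup_nhdsNE_eq_max {g : ℝ → ℝ} {L : ℝ} (hleft : ∀ᶠ m in 𝓝[<] 0, g m = 0)
    (hright : Tendsto g (𝓝[>] 0) (𝓝 L)) : limsup g (𝓝[≠] 0) = max L 0 := by
  have eventually_lt : ∀ c, max L 0 < c → ∀ᶠ m in 𝓝[≠] (0:ℝ), g m < c := fun c hc => by
    rw [← nhdsLT_sup_nhdsGT, eventually_sup]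
    exact ⟨hleft.mono fun m hm => hm ▸ (le_max_right L 0).trans_lt hc,
      hright.eventually (gt_mem_nhds ((le_max_left L 0).trans_lt hc))⟩
  have eventually_gt : ∀ c, c < min L 0 → ∀ᶠ m in 𝓝[≠] (0:ℝ), c < g m := fun c hc => by
    rw [← nhdsLT_sup_nhdsGT, eventually_sup]
    exact ⟨hleft.mono fun m hm => hm ▸ hc.trans_le (min_le_right L 0),
      hright.eventually (lt_mem_nhds (hc.trans_le (min_le_left L 0)))⟩
  have hbdd : IsBoundedUnder (· ≤ ·) (𝓝[≠] (0:ℝ)) g :=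
    ⟨max L 0 + 1, eventually_map.2 ((eventually_lt _ (lt_add_one _)).mono fun _ h => h.le)⟩
  have hcobdd : IsCoboundedUnder (· ≤ ·) (𝓝[≠] (0:ℝ)) g :=
    IsBoundedUnder.isCoboundedUnder_le
      ⟨min L 0 - 1, eventually_map.2 ((eventually_gt _ (sub_one_lt _)).mono fun _ h => h.le)⟩
  refine le_antisymm (le_of_forall_gt_imp_ge_of_dense fun c hc =>
    limsup_le_of_le hcobdd ((eventually_lt c hc).mono fun _ h => h.le)) (max_le ?_ ?_)
  · rw [← hright.limsup_eq]
    exact limsup_le_limsup_of_le (nhdsGT_le_nhdsNE 0) hright.isBoundedUnder_ge.isCoboundedUnder_le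
      hbdd
  · exact le_limsup_of_frequently_le
      ((hleft.frequently.mono fun _ h => h.ge).filter_mono (nhdsLT_le_nhdsNE 0)) hbdd

theorem tendsto_integral_div_nhdsGT {h : ℝ → ℝ} {a T : ℝ} (haT : a < T)
    (hh : ContinuousOn h (Icc a T)) :
    Tendsto (fun m => (∫ s in (T - m)..T, h s) / m) (𝓝[>] 0) (𝓝 (h T)) := by
  have hcont : ContinuousWithinAt h (Iic T) T :=
    (continuousWithinAt_Icc_iff_Iic haT).1 (hh T ⟨haT.le, le_rfl⟩)
  have hmeas : StronglyMeasurableAtFilter h (𝓝[≤] T) := by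
    rw [← nhdsWithin_Icc_eq_nhdsLE haT]
    exact hh.stronglyMeasurableAtFilter_nhdsWithin measurableSet_Icc T
  have hderiv : HasDerivWithinAt (fun u => ∫ s in u..T, h s) (-h T) (Iic T) T :=
    integral_hasDerivWithinAt_left IntervalIntegrable.refl hmeas hcont
  have hslope := (hasDerivWithinAt_iff_tendsto_slope.1 hderiv).neg
  rw [Iic_sdiff_right, neg_neg] at hslope
  have hshift : Tendsto (fun m : ℝ => T - m) (𝓝[>] 0) (𝓝[<] T) := by
    refine tendsto_nhdsWithin_of_tendsto_nhds_of_eventually_within _ ?_ ?_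
    · exact ((continuous_sub_left T).tendsto' 0 T (sub_zero T)).mono_left nhdsWithin_le_nhds
    · exact eventually_nhdsWithin_of_forall fun m (hm : 0 < m) => sub_lt_self T hm
  refine (hslope.comp hshift).congr fun m => ?_
  simp only [Function.comp_apply, slope_def_field, integral_same]
  rw [sub_zero, sub_sub_cancel_left, div_neg, neg_neg]

theorem intervalIntegral.integral_ite_lt {h₀ h₁ : ℝ → ℝ} {a b c : ℝ} (hac : a ≤ c) (hcb : c ≤ b)
    (h₀i : IntervalIntegrable h₀ volume a c) (h₁i : IntervalIntegrable h₁ volume c b) :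
    ∫ s in a..b, (if s < c then h₀ s else h₁ s) = (∫ s in a..c, h₀ s) + ∫ s in c..b, h₁ s := by
  have e₀ : EqOn h₀ (fun s => if s < c then h₀ s else h₁ s) (uIoo a c) := fun s hs =>
    (if_pos (by rw [uIoo_of_le hac] at hs; exact hs.2)).symm
  have e₁ : EqOn (fun s => if s < c then h₀ s else h₁ s) h₁ (uIcc c b) := fun s hs =>
    if_neg (by rw [uIcc_of_le hcb] at hs; exact not_lt.2 hs.1)
  rw [← integral_add_adjacent_intervals (h₀i.congr_uIoo e₀)
    (h₁i.congr (e₁.symm.mono uIoc_subset_uIcc)), ← integral_congr_uIoo e₀, integral_congr e₁]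

noncomputable def switchAt {α : Type*} (T : ℝ) (a b : α) (s : ℝ) : α := if s < T then a else b

theorem monotone_switchAt {α : Type*} [Preorder α] {a b : α} (T : ℝ) (hab : a ≤ b) :
    Monotone (switchAt T a b) := fun s s' hss' => by
  unfold switchAt
  split_ifs with h h' h' <;> first | exact le_rfl | exact hab | exact absurd (hss'.trans_lt h') h

section StepAllocation

variable {Y : Type*} {f : Y → ℝ → ℝ → ℝ} {y₀ y₁ : Y} {p₀ p₁ : ℝ} {R T ν : ℝ}

theorem payoff_switchAt_add (m s : ℝ) :
    f (switchAt T y₀ y₁ (s + m)) (switchAt T p₀ p₁ (s + m)) (s + ν) =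
      if s < T - m then f y₀ p₀ (s + ν) else f y₁ p₁ (s + ν) := by
  simp only [switchAt, lt_sub_iff_add_lt]
  split_ifs <;> rfl

theorem integral_switchAt (h₀ : ContinuousOn (fun s => f y₀ p₀ (s + ν)) (Icc R T))
    (h₁ : ContinuousOn (fun s => f y₁ p₁ (s + ν)) (Icc R T)) {m : ℝ} (hm₀ : 0 ≤ m)
    (hm : m ≤ T - R) :
    ∫ s in R..T, f (switchAt T y₀ y₁ (s + m)) (switchAt T p₀ p₁ (s + m)) (s + ν) =
      (∫ s in R..T - m, f y₀ p₀ (s + ν)) + ∫ s in T - m..T, f y₁ p₁ (s + ν) := by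
  simp only [payoff_switchAt_add]
  exact integral_ite_lt (by linarith) (by linarith)
    ((h₀.mono (Icc_subset_Icc_right (by linarith))).intervalIntegrable_of_Icc (by linarith))
    ((h₁.mono (Icc_subset_Icc_left (by linarith))).intervalIntegrable_of_Icc (by linarith))

theorem mimickGain_switchAt_of_neg (hRT : R ≤ T)
    (h₀ : ContinuousOn (fun s => f y₀ p₀ (s + ν)) (Icc R T))
    (h₁ : ContinuousOn (fun s => f y₁ p₁ (s + ν)) (Icc R T)) {m : ℝ} (hm : m < 0) :
    mimickGain f (switchAt T y₀ y₁) (switchAt T p₀ p₁) R T ν m = 0 := by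
  have hshift : ∫ s in R..T, f (switchAt T y₀ y₁ (s + m)) (switchAt T p₀ p₁ (s + m)) (s + ν) =
      ∫ s in R..T, f y₀ p₀ (s + ν) := by
    refine integral_congr fun s hs => ?_
    rw [uIcc_of_le hRT] at hs
    simp only [payoff_switchAt_add, if_pos (show s < T - m by linarith [hs.2])]
  have hfix := integral_switchAt h₀ h₁ le_rfl (sub_nonneg.2 hRT)
  simp only [add_zero, sub_zero, integral_same] at hfix
  simp only [mimickGain, hshift, hfix, sub_self, zero_div]

theorem mimickGain_switchAt_of_pos
    (h₀ : ContinuousOn (fun s => f y₀ p₀ (s + ν)) (Icc R T))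
    (h₁ : ContinuousOn (fun s => f y₁ p₁ (s + ν)) (Icc R T)) {m : ℝ} (hm₀ : 0 < m)
    (hm : m ≤ T - R) :
    mimickGain f (switchAt T y₀ y₁) (switchAt T p₀ p₁) R T ν m =
      (∫ s in T - m..T, f y₁ p₁ (s + ν)) / m - (∫ s in T - m..T, f y₀ p₀ (s + ν)) / m := by
  have hfix := integral_switchAt h₀ h₁ le_rfl (by linarith)
  simp only [add_zero, sub_zero, integral_same] at hfix
  rw [mimickGain, integral_switchAt h₀ h₁ hm₀.le hm, hfix,
    ← integral_add_adjacent_intervals (b := T - m)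
      ((h₀.mono (Icc_subset_Icc_right (by linarith))).intervalIntegrable_of_Icc (by linarith))
      ((h₀.mono (Icc_subset_Icc_left (by linarith))).intervalIntegrable_of_Icc (by linarith))]
  ring

theorem limsup_mimickGain_switchAt (hRT : R < T)
    (h₀ : ContinuousOn (fun s => f y₀ p₀ (s + ν)) (Icc R T))
    (h₁ : ContinuousOn (fun s => f y₁ p₁ (s + ν)) (Icc R T)) :
    limsup (mimickGain f (switchAt T y₀ y₁) (switchAt T p₀ p₁) R T ν) (𝓝[≠] 0) =
      max (f y₁ p₁ (T + ν) - f y₀ p₀ (T + ν)) 0 := by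
  refine limsup_nhdsNE_eq_max
    (eventually_nhdsWithin_of_forall fun m hm => mimickGain_switchAt_of_neg hRT.le h₀ h₁ hm)
    (((tendsto_integral_div_nhdsGT hRT h₁).sub (tendsto_integral_div_nhdsGT hRT h₀)).congr' ?_)
  filter_upwards [Ioo_mem_nhdsGT (sub_pos.2 hRT)] with m hm
  exact (mimickGain_switchAt_of_pos h₀ h₁ hm.1 hm.2.le).symm

end StepAllocation

def SingleCrossingDifferences {Y : Type*} [Preorder Y] (f : Y → ℝ → ℝ → ℝ) : Prop :=
  ∀ ⦃y₀ y₁ : Y⦄, y₀ ≤ y₁ → ∀ p₀ p₁ τ c : ℝ, 0 ≤ τ → τ < c → c ≤ 1 →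
    f y₀ p₀ τ < f y₁ p₁ τ → f y₀ p₀ c < f y₁ p₁ c

section OuterSpenceMirrlees

variable {Y : Type*} [PartialOrder Y] {f : Y → ℝ → ℝ → ℝ}

theorem OuterSpenceMirrlees.lt_of_lt (hSM : OuterSpenceMirrlees f)
    (hcont : ∀ y p, ContinuousOn (fun t => f y p t) (Icc 0 1)) {y₀ y₁ : Y} (hy : y₀ ≤ y₁)
    {p₀ p₁ R T : ℝ} (hR : 0 < R) (hRT : R < T) (hT : T < 1) {n n' : ℝ}
    (hn : n ∈ Icc (-R) (1 - T)) (hn' : n' ∈ Icc (-R) (1 - T)) (hnn' : n < n')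
    (h : f y₀ p₀ (T + n) < f y₁ p₁ (T + n)) : f y₀ p₀ (T + n') < f y₁ p₁ (T + n') := by
  have hshift : ∀ y p, ∀ ν ∈ Icc (-R) (1 - T), ContinuousOn (fun s => f y p (s + ν)) (Icc R T) :=
    fun y p ν hν => (hcont y p).comp (continuous_add_const ν).continuousOn fun s hs =>
      ⟨by linarith [hs.1, hν.1], by linarith [hs.2, hν.2]⟩
  have hlimsup : ∀ ν ∈ Icc (-R) (1 - T),
      limsup (mimickGain f (switchAt T y₀ y₁) (switchAt T p₀ p₁) R T ν) (𝓝[≠] 0) =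
        max (f y₁ p₁ (T + ν) - f y₀ p₀ (T + ν)) 0 :=
    fun ν hν => limsup_mimickGain_switchAt hRT (hshift y₀ p₀ ν hν) (hshift y₁ p₁ ν hν)
  have hcross := (hSM _ ((monotone_switchAt T hy).monotoneOn _) (switchAt T p₀ p₁)
    R ⟨hR, by linarith⟩ T ⟨by linarith, hT⟩ hRT n hn n' hn' hnn').2
  simp only [hlimsup n hn, hlimsup n' hn', lt_max_iff, lt_irrefl, or_false, sub_pos] at hcross
  exact hcross h

theorem OuterSpenceMirrlees.singleCrossingDifferences (hSM : OuterSpenceMirrlees f)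
    (hcont : ∀ y p, ContinuousOn (fun t => f y p t) (Icc 0 1)) :
    SingleCrossingDifferences f := by
  intro y₀ y₁ hy p₀ p₁ τ c hτ hτc hc h
  -- The condition only concerns interior types `0 < R < T < 1`, so first move the strict
  -- crossing from `τ` (possibly `0`) to some `T ∈ (τ, c)`.
  obtain ⟨T, ⟨hτT, hTc⟩, hT⟩ : ∃ T ∈ Ioo τ c, f y₀ p₀ T < f y₁ p₁ T := by
    have hD : ContinuousWithinAt (fun x => f y₁ p₁ x - f y₀ p₀ x) (Ioo τ c) τ :=
      ((hcont y₁ p₁).sub (hcont y₀ p₀) τ ⟨hτ, by linarith⟩).mono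
        fun x hx => ⟨by linarith [hx.1], by linarith [hx.2]⟩
    have : (𝓝[Ioo τ c] τ).NeBot := by rw [nhdsWithin_Ioo_eq_nhdsGT hτc]; infer_instance
    obtain ⟨T, hT, hTmem⟩ :=
      ((hD.eventually (lt_mem_nhds (sub_pos.2 h))).and self_mem_nhdsWithin).exists
    exact ⟨T, hTmem, sub_pos.1 hT⟩
  have hT₀ : 0 < T := by linarith
  have := hSM.lt_of_lt hcont hy (half_pos hT₀) (half_lt_self hT₀) (by linarith)
    (show (0:ℝ) ∈ Icc (-(T / 2)) (1 - T) from ⟨by linarith, by linarith⟩)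
    (show c - T ∈ Icc (-(T / 2)) (1 - T) from ⟨by linarith, by linarith⟩) (by linarith)
    (by simpa using hT)
  simpa using this

end OuterSpenceMirrlees

section Construction

variable {Y : Type*} (f : Y → ℝ → ℝ → ℝ) (Ya : ℝ → Y)

noncomputable def payment (y : Y) (v t : ℝ) : ℝ :=
  Function.invFun (fun p => f y p t) v

noncomputable def mimicValue (a v b : ℝ) : ℝ :=
  f (Ya a) (payment f (Ya a) v a) b

inductive Attainable : ℝ → ℝ → Prop
  | zero : Attainable 0 0
  | step {a v : ℝ} (b : ℝ) : Attainable a v → a ≤ b → b ≤ 1 →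
      Attainable b (mimicValue f Ya a v b)

noncomputable def attainableSup (t : ℝ) : ℝ :=
  sSup {v | Attainable f Ya t v}

variable {f Ya}

theorem mimicValue_self
    (hsurj : ∀ y, ∀ t ∈ Icc (0:ℝ) 1, Function.Surjective (fun p => f y p t))
    {a : ℝ} (ha : a ∈ Icc (0:ℝ) 1) (v : ℝ) : mimicValue f Ya a v a = v :=
  Function.invFun_eq (hsurj (Ya a) a ha v)

theorem continuous_mimicValue
    (henv : ∀ y, ∀ t ∈ Icc (0:ℝ) 1,
      StrictAnti (fun p => f y p t) ∧ Function.Surjective (fun p => f y p t))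
    {a b : ℝ} (ha : a ∈ Icc (0:ℝ) 1) (hb : b ∈ Icc (0:ℝ) 1) :
    Continuous fun v => mimicValue f Ya a v b := by
  obtain ⟨hanti, hsurj⟩ := henv (Ya a) a ha
  have hpay_anti : Antitone fun v => payment f (Ya a) v a := fun v v' hvv' => by
    show payment f (Ya a) v' a ≤ payment f (Ya a) v a
    rwa [← hanti.le_iff_ge, payment, payment, Function.invFun_eq (hsurj v),
      Function.invFun_eq (hsurj v')]
  have hpay_surj : Function.Surjective fun v => payment f (Ya a) v a := fun p =>
    ⟨f (Ya a) p a, Function.leftInverse_invFun hanti.injective p⟩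
  have hpay : Continuous fun v => payment f (Ya a) v a :=
    hpay_anti.continuous_of_surjective hpay_surj
  have hval : Continuous fun p => f (Ya a) p b :=
    (henv (Ya a) b hb).1.antitone.continuous_of_surjective (henv (Ya a) b hb).2
  exact hval.comp hpay

theorem Attainable.mem_Icc {t v : ℝ} (h : Attainable f Ya t v) : t ∈ Icc (0:ℝ) 1 := by
  induction h with
  | zero => exact ⟨le_rfl, zero_le_one⟩
  | step b _ hab hb ih => exact ⟨ih.1.trans hab, hb⟩

theorem Attainable.le_mul
    (hsurj : ∀ y, ∀ t ∈ Icc (0:ℝ) 1, Function.Surjective (fun p => f y p t))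
    {K : ℝ} (hK : ∀ y p, ∀ a ∈ Icc (0:ℝ) 1, ∀ b ∈ Icc (0:ℝ) 1, |f y p b - f y p a| ≤ K * |b - a|)
    {t v : ℝ} (h : Attainable f Ya t v) : v ≤ K * t := by
  induction h with
  | zero => simp
  | @step a v b hav hab hb ih =>
    have ha := hav.mem_Icc
    have hslack := (le_abs_self _).trans (hK (Ya a) (payment f (Ya a) v a) a ha b
      ⟨ha.1.trans hab, hb⟩)
    rw [abs_of_nonneg (sub_nonneg.2 hab)] at hslack
    have hv : f (Ya a) (payment f (Ya a) v a) a = v := mimicValue_self hsurj ha v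
    rw [mimicValue]
    linarith

theorem mimicValue_mimicValue_le [Preorder Y]
    (hsurj : ∀ y, ∀ t ∈ Icc (0:ℝ) 1, Function.Surjective (fun p => f y p t))
    (hSCD : SingleCrossingDifferences f) (hYa : MonotoneOn Ya (Icc (0:ℝ) 1)) {a b τ : ℝ}
    (ha : a ∈ Icc (0:ℝ) 1) (hb : b ∈ Icc (0:ℝ) 1) (hab : a ≤ b) (hτ₀ : 0 ≤ τ) (hτb : τ ≤ b)
    (v : ℝ) : mimicValue f Ya b (mimicValue f Ya a v b) τ ≤ mimicValue f Ya a v τ := by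
  rcases hτb.eq_or_lt with rfl | hτb
  · rw [mimicValue_self hsurj hb]
  · refine not_lt.1 fun hlt => (hSCD (hYa ha hb hab) _ _ τ b hτ₀ hτb hb.2 hlt).ne ?_
    exact (mimicValue_self hsurj hb _).symm

theorem Attainable.exists_ge [Preorder Y]
    (hsurj : ∀ y, ∀ t ∈ Icc (0:ℝ) 1, Function.Surjective (fun p => f y p t))
    (hSCD : SingleCrossingDifferences f) (hYa : MonotoneOn Ya (Icc (0:ℝ) 1)) {b w : ℝ}
    (h : Attainable f Ya b w) {τ : ℝ} (hτ₀ : 0 ≤ τ) (hτb : τ ≤ b) :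
    ∃ v, Attainable f Ya τ v ∧ mimicValue f Ya b w τ ≤ v := by
  induction h generalizing τ with
  | zero =>
    obtain rfl : τ = 0 := le_antisymm hτb hτ₀
    exact ⟨0, .zero, (mimicValue_self hsurj ⟨le_rfl, zero_le_one⟩ 0).le⟩
  | @step a v b hav hab hb ih =>
    have hmimic := mimicValue_mimicValue_le hsurj hSCD hYa hav.mem_Icc
      ⟨hav.mem_Icc.1.trans hab, hb⟩ hab hτ₀ hτb v
    rcases le_total τ a with hτa | haτ
    · obtain ⟨v', hv', hle⟩ := ih hτ₀ hτa
      exact ⟨v', hv', hmimic.trans hle⟩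
    · exact ⟨_, .step τ hav haτ (hτb.trans hb), hmimic⟩

theorem attainable_nonempty {t : ℝ} (ht : t ∈ Icc (0:ℝ) 1) :
    {v | Attainable f Ya t v}.Nonempty :=
  ⟨_, Attainable.step t .zero ht.1 ht.2⟩

theorem bddAbove_attainable
    (hsurj : ∀ y, ∀ t ∈ Icc (0:ℝ) 1, Function.Surjective (fun p => f y p t))
    {K : ℝ} (hK : ∀ y p, ∀ a ∈ Icc (0:ℝ) 1, ∀ b ∈ Icc (0:ℝ) 1, |f y p b - f y p a| ≤ K * |b - a|)
    (t : ℝ) : BddAbove {v | Attainable f Ya t v} :=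
  ⟨K * t, fun _ hv => hv.le_mul hsurj hK⟩

theorem mimicValue_attainableSup_le [Preorder Y]
    (henv : ∀ y, ∀ t ∈ Icc (0:ℝ) 1,
      StrictAnti (fun p => f y p t) ∧ Function.Surjective (fun p => f y p t))
    {K : ℝ} (hK : ∀ y p, ∀ a ∈ Icc (0:ℝ) 1, ∀ b ∈ Icc (0:ℝ) 1, |f y p b - f y p a| ≤ K * |b - a|)
    (hSCD : SingleCrossingDifferences f) (hYa : MonotoneOn Ya (Icc (0:ℝ) 1)) {a b : ℝ}
    (ha : a ∈ Icc (0:ℝ) 1) (hb : b ∈ Icc (0:ℝ) 1) :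
    mimicValue f Ya a (attainableSup f Ya a) b ≤ attainableSup f Ya b := by
  have hsurj : ∀ y, ∀ t ∈ Icc (0:ℝ) 1, Function.Surjective (fun p => f y p t) :=
    fun y t ht => (henv y t ht).2
  have hbdd := bddAbove_attainable (Ya := Ya) hsurj hK
  refine (continuous_mimicValue henv ha hb).apply_csSup_le (attainable_nonempty ha) (hbdd a)
    fun v hv => ?_
  rcases le_total a b with hab | hba
  · exact le_csSup (hbdd b) (Attainable.step b hv hab hb.2)
  · obtain ⟨v', hv', hle⟩ := Attainable.exists_ge hsurj hSCD hYa hv hb.1 hba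
    exact hle.trans (le_csSup (hbdd b) hv')

theorem implementable_of_singleCrossingDifferences [Preorder Y]
    (henv : ∀ y, ∀ t ∈ Icc (0:ℝ) 1,
      StrictAnti (fun p => f y p t) ∧ Function.Surjective (fun p => f y p t))
    {K : ℝ} (hK : ∀ y p, ∀ a ∈ Icc (0:ℝ) 1, ∀ b ∈ Icc (0:ℝ) 1, |f y p b - f y p a| ≤ K * |b - a|)
    (hSCD : SingleCrossingDifferences f) (hYa : MonotoneOn Ya (Icc (0:ℝ) 1)) :
    Implementable f Ya :=
  ⟨fun t => payment f (Ya t) (attainableSup f Ya t) t, fun _ hr _ ht =>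
    (mimicValue_attainableSup_le henv hK hSCD hYa hr ht).trans_eq
      (mimicValue_self (fun y t ht => (henv y t ht).2) ht _).symm⟩

end Construction

theorem PayoffRegular.continuousOn {Y : Type*} [PartialOrder Y] {f f₃ : Y → ℝ → ℝ → ℝ}
    (hf : PayoffRegular f f₃) (y : Y) (p : ℝ) : ContinuousOn (fun t => f y p t) (Icc 0 1) :=
  fun t ht => (hf.1 y p t ht).continuousWithinAt

theorem PayoffRegular.exists_abs_sub_le {Y : Type*} [PartialOrder Y] {f f₃ : Y → ℝ → ℝ → ℝ}
    (hf : PayoffRegular f f₃) :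
    ∃ K, ∀ y p, ∀ a ∈ Icc (0:ℝ) 1, ∀ b ∈ Icc (0:ℝ) 1, |f y p b - f y p a| ≤ K * |b - a| := by
  obtain ⟨hderiv, ⟨K, hK⟩, -⟩ := hf
  refine ⟨K, fun y p a ha b hb => ?_⟩
  simpa only [Real.norm_eq_abs] using Convex.norm_image_sub_le_of_norm_hasDerivWithin_le
    (fun t ht => hderiv y p t ht) (fun t ht => (Real.norm_eq_abs _).trans_le (hK y p t ht))
    (convex_Icc 0 1) ha hb

theorem implementability_theorem_general
    {Y : Type*} [PartialOrder Y] (f f₃ : Y → ℝ → ℝ → ℝ)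
    (henv : ∀ (y : Y), ∀ t ∈ Icc (0:ℝ) 1,
      StrictAnti (fun p => f y p t) ∧ Function.Surjective (fun p => f y p t))
    (hf : PayoffRegular f f₃)
    (hSM : OuterSpenceMirrlees f)
    (Ya : ℝ → Y) (hYa : MonotoneOn Ya (Icc (0:ℝ) 1)) :
    Implementable f Ya := by
  obtain ⟨K, hK⟩ := hf.exists_abs_sub_le
  exact implementable_of_singleCrossingDifferences henv hK
    (hSM.singleCrossingDifferences hf.continuousOn) hYa

/-- **Implementability theorem.** If the partially ordered outcome set `𝒴` is regular, the
payoff `f` (with `p ↦ f y p t` strictly decreasing and onto `ℝ`) is regular, and `f` satisfies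
the outer Spence–Mirrlees condition, then every increasing allocation `Y : [0,1] → 𝒴` is
implementable. -/
theorem implementability_theorem
    {Y : Type*} [PartialOrder Y] (f f₃ : Y → ℝ → ℝ → ℝ)
    (henv : ∀ (y : Y), ∀ t ∈ Icc (0:ℝ) 1,
      StrictAnti (fun p => f y p t) ∧ Function.Surjective (fun p => f y p t))
    (hY : OutcomeRegular Y)
    (hf : PayoffRegular f f₃)
    (hSM : OuterSpenceMirrlees f)
    (Ya : ℝ → Y) (hYa : MonotoneOn Ya (Icc (0:ℝ) 1)) :
    Implementable f Ya :=
  implementability_theorem_general f f₃ henv hf hSM Ya hYa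
end

section
/- Non-decreasing comparative statics: Let 𝒳 and 𝒯 be partially ordered sets and f : 𝒳 × 𝒯 → ℝ. If f has strictly single-crossing differences, then every optimal decision rule X : 𝒯 → 𝒳 is non-decreasing, i.e. there are no t ≤ t' in 𝒯 with X(t') < X(t). -/
def StrictSingleCrossingDifferences {𝒳 𝒯 : Type*} [Preorder 𝒳] [Preorder 𝒯]
    (f : 𝒳 → 𝒯 → ℝ) : Prop :=
  ∀ x x' : 𝒳, x < x' → ∀ t t' : 𝒯, t < t' → 0 ≤ f x' t - f x t → 0 < f x' t' - f x t'

theorem StrictSingleCrossingDifferences.lt_of_le {𝒳 𝒯 : Type*} [Preorder 𝒳] [Preorder 𝒯]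
    {f : 𝒳 → 𝒯 → ℝ} (hf : StrictSingleCrossingDifferences f) {x x' : 𝒳} (hx : x < x')
    {t t' : 𝒯} (ht : t < t') (hle : f x t ≤ f x' t) : f x t' < f x' t' :=
  sub_pos.mp (hf x x' hx t t' ht (sub_nonneg.mpr hle))

/-- **Non-decreasing comparative statics.** Let `𝒳` and `𝒯` be partially ordered sets and
`f : 𝒳 × 𝒯 → ℝ` have strictly single-crossing differences: for any `x < x'` in `𝒳` and
`t < t'` in `𝒯`, `f x' t − f x t ≥ 0` implies `f x' t' − f x t' > 0`. Then every optimal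
decision rule `X : 𝒯 → 𝒳` is non-decreasing: there are no `t ≤ t'` in `𝒯` with
`X t' < X t`. -/
theorem nondecreasing_comparative_statics
    {𝒳 𝒯 : Type*} [PartialOrder 𝒳] [PartialOrder 𝒯] (f : 𝒳 → 𝒯 → ℝ)
    (hscd : ∀ x x' : 𝒳, x < x' → ∀ t t' : 𝒯, t < t' →
      0 ≤ f x' t - f x t → 0 < f x' t' - f x t')
    (X : 𝒯 → 𝒳)
    (hopt : ∀ t : 𝒯, ∀ x : 𝒳, f x t ≤ f (X t) t) :
    ∀ t t' : 𝒯, t ≤ t' → ¬ X t' < X t := by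
  intro t t' hle hlt
  obtain ht | rfl := hle.lt_or_eq
  · have hbeat : f (X t') t' < f (X t) t' :=
      StrictSingleCrossingDifferences.lt_of_le hscd hlt ht (hopt t (X t'))
    exact (hopt t' (X t)).not_gt hbeat
  · exact lt_irrefl _ hlt
end

section
/- If the payoff f is regular and satisfies the (strict) outer Spence–Mirrlees condition, then for any price schedule π : 𝒴 → ℝ, the map (y,t) ↦ f(y,π(y),t) on 𝒴 × [0,1] has (strictly) single-crossing differences: for any y < y' in 𝒴, the map t ↦ f(y',π(y'),t) − f(y,π(y),t) is (strictly) single-crossing. -/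
open MeasureTheory Set Filter intervalIntegral

/-- `φ` is strictly single-crossing on `S`. -/
def StrictSingleCrossingOn (φ : ℝ → ℝ) (S : Set ℝ) : Prop :=
  ∀ n ∈ S, ∀ n' ∈ S, n < n' → (0 ≤ φ n → 0 < φ n')

/-- The *strict outer Spence–Mirrlees condition*. -/
def StrictOuterSpenceMirrlees {Y : Type*} [PartialOrder Y] (f : Y → ℝ → ℝ → ℝ) : Prop :=
  ∀ Ya : ℝ → Y, MonotoneOn Ya (Icc (0:ℝ) 1) → ∀ P : ℝ → ℝ,
    ∀ r ∈ Ioo (0:ℝ) 1, ∀ t ∈ Ioo (0:ℝ) 1, r < t →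
      StrictSingleCrossingOn
        (fun n => limsup (mimickGain f Ya P r t n) (nhdsWithin 0 {(0:ℝ)}ᶜ))
        (Icc (-r) (1 - t))

/-!
Feed the outer Spence–Mirrlees condition an allocation with two steps, at `r` and `t`. For such
an allocation the mimicking gain at shift `n` is a difference quotient of an integral whose
integrand jumps at `r` and at `t`, so by the fundamental theorem of calculus its left and right
limits as `m → 0` are the payoff jumps at the types `r + n` and `t + n`, and the limsup is the
larger of the two. Let one step be the move from `(y, π y)` to `(y', π y')` and the other a pure
price increase, a strict loss since `f` is decreasing in the price; then the limsup has the sign of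
`f y' (π y') τ - f y (π y) τ` at `τ = r + n` (resp. `t + n`). Single crossing in `n` thus becomes
single crossing in `τ` on `[0, 1 - (t - r)]` and on `[t - r, 1]`, which for `[r, t] = [1/3, 2/3]`
overlap and cover `[0, 1]`.
-/

open Topology SignType

lemma limsup_sup_eq_max {u : ℝ → ℝ} {l₁ l₂ : Filter ℝ} [l₁.NeBot] [l₂.NeBot] {x y : ℝ}
    (h₁ : Tendsto u l₁ (𝓝 x)) (h₂ : Tendsto u l₂ (𝓝 y)) :
    limsup u (l₁ ⊔ l₂) = max x y := by
  have hbdd : IsBoundedUnder (· ≤ ·) (l₁ ⊔ l₂) u := by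
    rw [IsBoundedUnder, map_sup]
    exact isBounded_sup h₁.isBoundedUnder_le h₂.isBoundedUnder_le
  have hcobdd : IsCoboundedUnder (· ≤ ·) (l₁ ⊔ l₂) u :=
    h₁.isCoboundedUnder_le.mono (map_mono le_sup_left)
  refine le_antisymm ((limsup_le_iff hcobdd hbdd).2 fun z hz => eventually_sup.2
    ⟨h₁.eventually (gt_mem_nhds ((le_max_left x y).trans_lt hz)),
      h₂.eventually (gt_mem_nhds ((le_max_right x y).trans_lt hz))⟩) (max_le ?_ ?_)
  · exact h₁.limsup_eq ▸ limsup_le_limsup_of_le le_sup_left h₁.isCoboundedUnder_le hbdd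
  · exact h₂.limsup_eq ▸ limsup_le_limsup_of_le le_sup_right h₂.isCoboundedUnder_le hbdd

lemma limsup_slope_eq_max {G : ℝ → ℝ} {x L R : ℝ} (hL : HasDerivWithinAt G L (Iic x) x)
    (hR : HasDerivWithinAt G R (Ici x) x) : limsup (slope G x) (𝓝[≠] x) = max L R := by
  rw [hasDerivWithinAt_iff_tendsto_slope, Iic_sdiff_right] at hL
  rw [hasDerivWithinAt_iff_tendsto_slope, Ici_sdiff_left] at hR
  rw [← nhdsLT_sup_nhdsGT]
  exact limsup_sup_eq_max hL hR

lemma hasDerivWithinAt_integral_add_integral {φ ψ : ℝ → ℝ} {a b u : ℝ}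
    (hφ : ContinuousOn φ (Icc a b)) (hψ : ContinuousOn ψ (Icc a b)) (hu : u ∈ Icc a b) :
    HasDerivWithinAt (fun v => (∫ x in a..v, φ x) + ∫ x in v..b, ψ x) (φ u - ψ u)
      (Icc a b) u := by
  have : Fact (u ∈ Icc a b) := ⟨hu⟩
  have hφ' := integral_hasDerivWithinAt_right (s := Icc a b) (t := Icc a b)
    ((hφ.mono (Icc_subset_Icc_right hu.2)).intervalIntegrable_of_Icc hu.1)
    (hφ.stronglyMeasurableAtFilter_nhdsWithin measurableSet_Icc u) (hφ u hu)
  have hψ' := integral_hasDerivWithinAt_left (s := Icc a b) (t := Icc a b)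
    ((hψ.mono (Icc_subset_Icc_left hu.1)).intervalIntegrable_of_Icc hu.2)
    (hψ.stronglyMeasurableAtFilter_nhdsWithin measurableSet_Icc u) (hψ u hu)
  exact sub_eq_add_neg (φ u) (ψ u) ▸ hφ'.add hψ'

lemma HasDerivWithinAt.comp_const_sub_zero {Φ : ℝ → ℝ} {Φ' a : ℝ} {s t : Set ℝ}
    (h : HasDerivWithinAt Φ Φ' t a) (hst : MapsTo (a - ·) s t) :
    HasDerivWithinAt (fun m => Φ (a - m)) (-Φ') s 0 := by
  rw [← sub_zero a] at h
  simpa [Function.comp_def] using h.comp 0 ((hasDerivAt_id 0).const_sub a).hasDerivWithinAt hst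

lemma integral_eq_add_of_eqOn_Ioo {φ u v : ℝ → ℝ} {a b c : ℝ} (hab : a ≤ b) (hbc : b ≤ c)
    (hu : IntervalIntegrable u volume a b) (hv : IntervalIntegrable v volume b c)
    (hφu : EqOn φ u (Ioo a b)) (hφv : EqOn φ v (Ioo b c)) :
    ∫ x in a..c, φ x = (∫ x in a..b, u x) + ∫ x in b..c, v x := by
  rw [← uIoo_of_le hab] at hφu
  rw [← uIoo_of_le hbc] at hφv
  rw [← integral_add_adjacent_intervals (hu.congr_uIoo hφu.symm) (hv.congr_uIoo hφv.symm),
    integral_congr_uIoo hφu, integral_congr_uIoo hφv]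

noncomputable def twoStep {α : Type*} (r t : ℝ) (a b c : α) (s : ℝ) : α :=
  if s < r then a else if s < t then b else c

section TwoStep

variable {α : Type*} {r t s : ℝ} {a b c : α}

lemma twoStep_of_lt (h : s < r) : twoStep r t a b c s = a := if_pos h

lemma twoStep_of_mem_Ico (h : s ∈ Ico r t) : twoStep r t a b c s = b := by
  rw [twoStep, if_neg h.1.not_gt, if_pos h.2]

lemma twoStep_of_le (hr : r ≤ s) (ht : t ≤ s) : twoStep r t a b c s = c := by
  rw [twoStep, if_neg hr.not_gt, if_neg ht.not_gt]

lemma monotone_twoStep [Preorder α] (hab : a ≤ b) (hbc : b ≤ c) :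
    Monotone (twoStep r t a b c) := by
  intro s s' hss'
  unfold twoStep
  split_ifs <;> first | rfl | exact hab | exact hbc | exact hab.trans hbc | linarith

end TwoStep

section TwoStepIntegral

variable {Y : Type*} (g : Y → ℝ → ℝ → ℝ) {ya yb yc : Y} {pa pb pc r t m : ℝ}

lemma integral_twoStep_shift_of_nonneg (hcont : ∀ z q, ContinuousOn (g z q) (Icc r t))
    (hm : m ∈ Icc 0 (t - r)) :
    ∫ s in r..t, g (twoStep r t ya yb yc (s + m)) (twoStep r t pa pb pc (s + m)) s =
      (∫ s in r..(t - m), g yb pb s) + ∫ s in (t - m)..t, g yc pc s := by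
  obtain ⟨hm₀, hm₁⟩ := hm
  refine integral_eq_add_of_eqOn_Ioo (by linarith) (by linarith)
    (((hcont _ _).mono (Icc_subset_Icc_right (by linarith))).intervalIntegrable_of_Icc
      (by linarith))
    (((hcont _ _).mono (Icc_subset_Icc_left (by linarith))).intervalIntegrable_of_Icc
      (by linarith)) (fun s hs => ?_) (fun s hs => ?_)
  · simp only [twoStep_of_mem_Ico (⟨by linarith [hs.1], by linarith [hs.2]⟩ : s + m ∈ Ico r t)]
  · simp only [twoStep_of_le (by linarith [hs.1] : r ≤ s + m) (by linarith [hs.1] : t ≤ s + m)]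

lemma integral_twoStep_shift_of_nonpos (hcont : ∀ z q, ContinuousOn (g z q) (Icc r t))
    (hm : m ∈ Icc (r - t) 0) :
    ∫ s in r..t, g (twoStep r t ya yb yc (s + m)) (twoStep r t pa pb pc (s + m)) s =
      (∫ s in r..(r - m), g ya pa s) + ∫ s in (r - m)..t, g yb pb s := by
  obtain ⟨hm₀, hm₁⟩ := hm
  refine integral_eq_add_of_eqOn_Ioo (by linarith) (by linarith)
    (((hcont _ _).mono (Icc_subset_Icc_right (by linarith))).intervalIntegrable_of_Icc
      (by linarith))
    (((hcont _ _).mono (Icc_subset_Icc_left (by linarith))).intervalIntegrable_of_Icc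
      (by linarith)) (fun s hs => ?_) (fun s hs => ?_)
  · simp only [twoStep_of_lt (by linarith [hs.2] : s + m < r)]
  · simp only [twoStep_of_mem_Ico (⟨by linarith [hs.1], by linarith [hs.2]⟩ : s + m ∈ Ico r t)]

end TwoStepIntegral

lemma limsup_mimickGain_twoStep {Y : Type*} (f : Y → ℝ → ℝ → ℝ) {ya yb yc : Y}
    {pa pb pc r t n : ℝ} (hrt : r < t)
    (hcont : ∀ z q, ContinuousOn (fun s => f z q (s + n)) (Icc r t)) :
    limsup (mimickGain f (twoStep r t ya yb yc) (twoStep r t pa pb pc) r t n) (𝓝[≠] 0) =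
      max (f yb pb (r + n) - f ya pa (r + n)) (f yc pc (t + n) - f yb pb (t + n)) := by
  set G : ℝ → ℝ := fun m => ∫ s in r..t,
    f (twoStep r t ya yb yc (s + m)) (twoStep r t pa pb pc (s + m)) (s + n)
  have hgain : mimickGain f (twoStep r t ya yb yc) (twoStep r t pa pb pc) r t n = slope G 0 := by
    funext m
    simp [mimickGain, slope_def_field, G]
  set Φ : Y → ℝ → Y → ℝ → ℝ → ℝ := fun z₁ q₁ z₂ q₂ u =>
    (∫ s in r..u, f z₁ q₁ (s + n)) + ∫ s in u..t, f z₂ q₂ (s + n)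
  have hΦ : ∀ z₁ q₁ z₂ q₂, ∀ u ∈ Icc r t, HasDerivWithinAt (Φ z₁ q₁ z₂ q₂)
      (f z₁ q₁ (u + n) - f z₂ q₂ (u + n)) (Icc r t) u := fun _ _ _ _ _ hu =>
    hasDerivWithinAt_integral_add_integral (hcont _ _) (hcont _ _) hu
  have hright : EqOn G (fun m => Φ yb pb yc pc (t - m)) (Icc 0 (t - r)) := fun _ hm =>
    integral_twoStep_shift_of_nonneg (fun z q s => f z q (s + n)) hcont hm
  have hleft : EqOn G (fun m => Φ ya pa yb pb (r - m)) (Icc (r - t) 0) := fun _ hm =>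
    integral_twoStep_shift_of_nonpos (fun z q s => f z q (s + n)) hcont hm
  have hR : HasDerivWithinAt G (-(f yb pb (t + n) - f yc pc (t + n))) (Ici 0) 0 :=
    ((hΦ yb pb yc pc t ⟨hrt.le, le_rfl⟩).comp_const_sub_zero
      fun m hm => ⟨by linarith [hm.2], by linarith [hm.1]⟩).congr_of_mem hright
      ⟨le_rfl, by linarith⟩ |>.mono_of_mem_nhdsWithin (Icc_mem_nhdsGE (by linarith))
  have hL : HasDerivWithinAt G (-(f ya pa (r + n) - f yb pb (r + n))) (Iic 0) 0 :=
    ((hΦ ya pa yb pb r ⟨le_rfl, hrt.le⟩).comp_const_sub_zero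
      fun m hm => ⟨by linarith [hm.2], by linarith [hm.1]⟩).congr_of_mem hleft
      ⟨by linarith, le_rfl⟩ |>.mono_of_mem_nhdsWithin (Icc_mem_nhdsLE (by linarith))
  rw [hgain, limsup_slope_eq_max hL hR, neg_sub, neg_sub]

lemma sign_max_of_neg {a d : ℝ} (hd : d < 0) : sign (max a d) = sign a := by
  rcases le_or_gt a d with h | h
  · rw [max_eq_right h, sign_neg hd, sign_neg (h.trans_lt hd)]
  · rw [max_eq_left h.le]

lemma nonneg_iff_and_pos_iff_of_sign_eq {u v : ℝ} (h : sign u = sign v) :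
    (0 ≤ u ↔ 0 ≤ v) ∧ (0 < u ↔ 0 < v) :=
  ⟨by rw [← sign_nonneg_iff, h, sign_nonneg_iff], by rw [← sign_eq_one_iff, h, sign_eq_one_iff]⟩

section SingleCrossing

variable {φ ψ : ℝ → ℝ} {a b c d : ℝ}

lemma SingleCrossingOn.of_sign_eq (hψ : SingleCrossingOn ψ (Icc a b))
    (h : ∀ n ∈ Icc a b, sign (ψ n) = sign (φ (c + n))) :
    SingleCrossingOn φ (Icc (c + a) (c + b)) := by
  intro x hx x' hx' hxx'
  have hmem : ∀ z ∈ Icc (c + a) (c + b), z - c ∈ Icc a b :=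
    fun z hz => ⟨by linarith [hz.1], by linarith [hz.2]⟩
  have hsign : ∀ z ∈ Icc (c + a) (c + b), sign (ψ (z - c)) = sign (φ z) :=
    fun z hz => by simpa using h _ (hmem z hz)
  obtain ⟨hx₀, hx₁⟩ := nonneg_iff_and_pos_iff_of_sign_eq (hsign x hx)
  obtain ⟨hx'₀, hx'₁⟩ := nonneg_iff_and_pos_iff_of_sign_eq (hsign x' hx')
  rw [← hx₀, ← hx₁, ← hx'₀, ← hx'₁]
  exact hψ _ (hmem x hx) _ (hmem x' hx') (by linarith)

lemma StrictSingleCrossingOn.of_sign_eq (hψ : StrictSingleCrossingOn ψ (Icc a b))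
    (h : ∀ n ∈ Icc a b, sign (ψ n) = sign (φ (c + n))) :
    StrictSingleCrossingOn φ (Icc (c + a) (c + b)) := by
  intro x hx x' hx' hxx'
  have hmem : ∀ z ∈ Icc (c + a) (c + b), z - c ∈ Icc a b :=
    fun z hz => ⟨by linarith [hz.1], by linarith [hz.2]⟩
  have hsign : ∀ z ∈ Icc (c + a) (c + b), sign (ψ (z - c)) = sign (φ z) :=
    fun z hz => by simpa using h _ (hmem z hz)
  rw [← (nonneg_iff_and_pos_iff_of_sign_eq (hsign x hx)).1,
    ← (nonneg_iff_and_pos_iff_of_sign_eq (hsign x' hx')).2]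
  exact hψ _ (hmem x hx) _ (hmem x' hx') (by linarith)

lemma SingleCrossingOn.Icc_of_overlap (h₁ : SingleCrossingOn φ (Icc a c))
    (h₂ : SingleCrossingOn φ (Icc b d)) (hbc : b ≤ c) : SingleCrossingOn φ (Icc a d) := by
  intro x hx x' hx' hxx'
  rcases le_or_gt x' c with hx'c | hx'c
  · exact h₁ x ⟨hx.1, by linarith⟩ x' ⟨by linarith [hx.1], hx'c⟩ hxx'
  rcases le_or_gt b x with hbx | hbx
  · exact h₂ x ⟨hbx, by linarith [hx'.2]⟩ x' ⟨by linarith, hx'.2⟩ hxx'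
  have k₁ := h₁ x ⟨hx.1, by linarith⟩ b ⟨by linarith [hx.1], hbc⟩ hbx
  have k₂ := h₂ b ⟨le_rfl, by linarith [hx'.2]⟩ x' ⟨by linarith, hx'.2⟩ (by linarith)
  exact ⟨k₂.1 ∘ k₁.1, k₂.2 ∘ k₁.2⟩

lemma StrictSingleCrossingOn.Icc_of_overlap (h₁ : StrictSingleCrossingOn φ (Icc a c))
    (h₂ : StrictSingleCrossingOn φ (Icc b d)) (hbc : b ≤ c) :
    StrictSingleCrossingOn φ (Icc a d) := by
  intro x hx x' hx' hxx'
  rcases le_or_gt x' c with hx'c | hx'c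
  · exact h₁ x ⟨hx.1, by linarith⟩ x' ⟨by linarith [hx.1], hx'c⟩ hxx'
  rcases le_or_gt b x with hbx | hbx
  · exact h₂ x ⟨hbx, by linarith [hx'.2]⟩ x' ⟨by linarith, hx'.2⟩ hxx'
  have k₁ := h₁ x ⟨hx.1, by linarith⟩ b ⟨by linarith [hx.1], hbc⟩ hbx
  have k₂ := h₂ b ⟨le_rfl, by linarith [hx'.2]⟩ x' ⟨by linarith, hx'.2⟩ (by linarith)
  exact fun h => k₂ (k₁ h).le

end SingleCrossing

section TwoStepDeviation

variable {Y : Type*} {f : Y → ℝ → ℝ → ℝ} {y y' : Y} {p p' r t n : ℝ}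

lemma sign_limsup_mimickGain_priceRiseAt_right
    (hcont : ∀ z q, ContinuousOn (fun τ => f z q τ) (Icc 0 1))
    (hanti : ∀ z, ∀ τ ∈ Icc (0:ℝ) 1, StrictAnti fun q => f z q τ)
    (hrt : r < t) (hn : n ∈ Icc (-r) (1 - t)) :
    sign (limsup (mimickGain f (twoStep r t y y' y') (twoStep r t p p' (p' + 1)) r t n) (𝓝[≠] 0))
      = sign (f y' p' (r + n) - f y p (r + n)) := by
  rw [limsup_mimickGain_twoStep f hrt fun z q =>
    (hcont z q).comp (continuous_add_const n).continuousOn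
      fun s hs => ⟨by linarith [hs.1, hn.1], by linarith [hs.2, hn.2]⟩]
  exact sign_max_of_neg (sub_neg.2 (hanti y' (t + n) ⟨by linarith [hn.1], by linarith [hn.2]⟩
    (lt_add_one p')))

lemma sign_limsup_mimickGain_priceRiseAt_left
    (hcont : ∀ z q, ContinuousOn (fun τ => f z q τ) (Icc 0 1))
    (hanti : ∀ z, ∀ τ ∈ Icc (0:ℝ) 1, StrictAnti fun q => f z q τ)
    (hrt : r < t) (hn : n ∈ Icc (-r) (1 - t)) :
    sign (limsup (mimickGain f (twoStep r t y y y') (twoStep r t (p - 1) p p') r t n) (𝓝[≠] 0))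
      = sign (f y' p' (t + n) - f y p (t + n)) := by
  rw [limsup_mimickGain_twoStep f hrt fun z q =>
    (hcont z q).comp (continuous_add_const n).continuousOn
      fun s hs => ⟨by linarith [hs.1, hn.1], by linarith [hs.2, hn.2]⟩, max_comm]
  exact sign_max_of_neg (sub_neg.2 (hanti y (r + n) ⟨by linarith [hn.1], by linarith [hn.2]⟩
    (sub_one_lt p)))

variable [PartialOrder Y]

lemma OuterSpenceMirrlees.singleCrossingOn_Icc (hOSM : OuterSpenceMirrlees f)
    (hcont : ∀ z q, ContinuousOn (fun τ => f z q τ) (Icc 0 1))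
    (hanti : ∀ z, ∀ τ ∈ Icc (0:ℝ) 1, StrictAnti fun q => f z q τ) (hyy' : y ≤ y') :
    SingleCrossingOn (fun τ => f y' p' τ - f y p τ) (Icc 0 1) := by
  have hr : (1 / 3 : ℝ) ∈ Ioo 0 1 := by norm_num
  have ht : (2 / 3 : ℝ) ∈ Ioo 0 1 := by norm_num
  have hrt : (1 / 3 : ℝ) < 2 / 3 := by norm_num
  have hlow := (hOSM (twoStep _ _ y y' y') ((monotone_twoStep hyy' le_rfl).monotoneOn _)
    (twoStep _ _ p p' (p' + 1)) _ hr _ ht hrt).of_sign_eq (φ := fun τ => f y' p' τ - f y p τ)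
    fun n hn => sign_limsup_mimickGain_priceRiseAt_right hcont hanti hrt hn
  have hhigh := (hOSM (twoStep _ _ y y y') ((monotone_twoStep le_rfl hyy').monotoneOn _)
    (twoStep _ _ (p - 1) p p') _ hr _ ht hrt).of_sign_eq (φ := fun τ => f y' p' τ - f y p τ)
    fun n hn => sign_limsup_mimickGain_priceRiseAt_left hcont hanti hrt hn
  convert hlow.Icc_of_overlap hhigh (by norm_num) using 2 <;> norm_num

lemma StrictOuterSpenceMirrlees.strictSingleCrossingOn_Icc (hOSM : StrictOuterSpenceMirrlees f)
    (hcont : ∀ z q, ContinuousOn (fun τ => f z q τ) (Icc 0 1))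
    (hanti : ∀ z, ∀ τ ∈ Icc (0:ℝ) 1, StrictAnti fun q => f z q τ) (hyy' : y ≤ y') :
    StrictSingleCrossingOn (fun τ => f y' p' τ - f y p τ) (Icc 0 1) := by
  have hr : (1 / 3 : ℝ) ∈ Ioo 0 1 := by norm_num
  have ht : (2 / 3 : ℝ) ∈ Ioo 0 1 := by norm_num
  have hrt : (1 / 3 : ℝ) < 2 / 3 := by norm_num
  have hlow := (hOSM (twoStep _ _ y y' y') ((monotone_twoStep hyy' le_rfl).monotoneOn _)
    (twoStep _ _ p p' (p' + 1)) _ hr _ ht hrt).of_sign_eq (φ := fun τ => f y' p' τ - f y p τ)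
    fun n hn => sign_limsup_mimickGain_priceRiseAt_right hcont hanti hrt hn
  have hhigh := (hOSM (twoStep _ _ y y y') ((monotone_twoStep le_rfl hyy').monotoneOn _)
    (twoStep _ _ (p - 1) p p') _ hr _ ht hrt).of_sign_eq (φ := fun τ => f y' p' τ - f y p τ)
    fun n hn => sign_limsup_mimickGain_priceRiseAt_left hcont hanti hrt hn
  convert hlow.Icc_of_overlap hhigh (by norm_num) using 2 <;> norm_num

end TwoStepDeviation

/-- If the payoff `f` (with `p ↦ f y p t` strictly decreasing and onto `ℝ`) is regular and
satisfies the (strict) outer Spence–Mirrlees condition, then for any price schedule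
`π : 𝒴 → ℝ`, the map `(y,t) ↦ f y (π y) t` has (strictly) single-crossing differences: for
`y < y'`, the map `t ↦ f y' (π y') t − f y (π y) t` is (strictly) single-crossing on `[0,1]`. -/
theorem priceSchedule_singleCrossingDifferences
    {Y : Type*} [PartialOrder Y] (f f₃ : Y → ℝ → ℝ → ℝ)
    (henv : ∀ (y : Y), ∀ t ∈ Icc (0:ℝ) 1,
      StrictAnti (fun p => f y p t) ∧ Function.Surjective (fun p => f y p t))
    (hf : PayoffRegular f f₃)
    (π : Y → ℝ) :
    (OuterSpenceMirrlees f → ∀ y y' : Y, y < y' →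
      SingleCrossingOn (fun t => f y' (π y') t - f y (π y) t) (Icc (0:ℝ) 1)) ∧
    (StrictOuterSpenceMirrlees f → ∀ y y' : Y, y < y' →
      StrictSingleCrossingOn (fun t => f y' (π y') t - f y (π y) t) (Icc (0:ℝ) 1)) := by
  have hcont : ∀ z q, ContinuousOn (fun τ => f z q τ) (Icc 0 1) :=
    fun z q τ hτ => (hf.1 z q τ hτ).continuousWithinAt
  have hanti : ∀ z, ∀ τ ∈ Icc (0:ℝ) 1, StrictAnti fun q => f z q τ :=
    fun z τ hτ => (henv z τ hτ).1
  exact ⟨fun hOSM y y' hyy' => hOSM.singleCrossingOn_Icc hcont hanti hyy'.le,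
    fun hOSM y y' hyy' => hOSM.strictSingleCrossingOn_Icc hcont hanti hyy'.le⟩
end

section
/- If there is a strictly increasing function from a partially ordered set 𝒴 to ℝ, then 𝒴 is chain-separable. -/
/-!
Restricted to a chain `C`, a strictly increasing `φ : 𝒴 → ℝ` is an order embedding, so it is
enough to find a countable order-dense subset of `φ '' C ⊆ ℝ` and pull it back. In a
second-countable linear order every subset `T` has one: pick a point of `T` in each basic open set
meeting `T`, which handles pairs `a < b` with a point of `T` strictly between them, and add the
points of `T` followed by a gap in `T`, which are countable because the gaps are disjoint
intervals.
-/

open Set TopologicalSpace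

def OrderDenseIn {α : Type*} [Preorder α] (B C : Set α) : Prop :=
  ∀ c ∈ C, ∀ c' ∈ C, c < c' → ∃ b ∈ B, c ≤ b ∧ b ≤ c'

theorem Set.exists_countable_subset_orderDenseIn {α : Type*} [LinearOrder α]
    [TopologicalSpace α] [OrderTopology α] [SecondCountableTopology α] (T : Set α) :
    ∃ D ⊆ T, D.Countable ∧ OrderDenseIn D T := by
  obtain ⟨𝓑, h𝓑c, -, h𝓑⟩ := exists_countable_basis α
  let D₁ := ⋃ U ∈ 𝓑, ⋃ h : (U ∩ T).Nonempty, {h.some}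
  let D₂ := {x ∈ T | ∃ z, x < z ∧ ∀ y ∈ T, x < y → z ≤ y}
  refine ⟨D₁ ∪ D₂, ?_, ?_, ?_⟩
  · exact union_subset (iUnion₂_subset fun U _ => iUnion_subset fun h =>
      singleton_subset_iff.2 h.some_mem.2) (sep_subset _ _)
  · exact (h𝓑c.biUnion fun U _ => countable_iUnion fun _ => countable_singleton _).union
      (countable_image_lt_image_Ioi_within T id)
  intro a ha b hb hab
  by_cases hbetween : ∃ z ∈ T, a < z ∧ z < b
  · obtain ⟨z, hz, haz, hzb⟩ := hbetween
    obtain ⟨U, hU𝓑, hzU, hUab⟩ :=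
      h𝓑.exists_subset_of_mem_open (show z ∈ Ioo a b from ⟨haz, hzb⟩) isOpen_Ioo
    have hUT : (U ∩ T).Nonempty := ⟨z, hzU, hz⟩
    have hab' := hUab hUT.some_mem.1
    exact ⟨hUT.some, Or.inl (mem_biUnion hU𝓑 (mem_iUnion.2 ⟨hUT, rfl⟩)), hab'.1.le, hab'.2.le⟩
  · push Not at hbetween
    exact ⟨a, Or.inr ⟨ha, b, hab, hbetween⟩, le_rfl, hab.le⟩

theorem IsChain.le_of_strictMono_of_apply_le {𝒴 α : Type*} [PartialOrder 𝒴] [Preorder α]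
    {φ : 𝒴 → α} (hφ : StrictMono φ) {C : Set 𝒴} (hC : IsChain (· ≤ ·) C) {c c' : 𝒴}
    (hc : c ∈ C) (hc' : c' ∈ C) (h : φ c ≤ φ c') : c ≤ c' := by
  rcases hC.total hc hc' with hle | hle
  · exact hle
  · rcases hle.eq_or_lt with rfl | hlt
    · exact le_rfl
    · exact absurd h (hφ hlt).not_ge

theorem IsChain.injOn_of_strictMono {𝒴 α : Type*} [PartialOrder 𝒴] [Preorder α]
    {φ : 𝒴 → α} (hφ : StrictMono φ) {C : Set 𝒴} (hC : IsChain (· ≤ ·) C) : InjOn φ C :=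
  fun _ hc _ hc' h => le_antisymm (hC.le_of_strictMono_of_apply_le hφ hc hc' h.le)
    (hC.le_of_strictMono_of_apply_le hφ hc' hc h.ge)

theorem IsChain.orderDenseIn_of_image {𝒴 α : Type*} [PartialOrder 𝒴] [Preorder α]
    {φ : 𝒴 → α} (hφ : StrictMono φ) {C : Set 𝒴} (hC : IsChain (· ≤ ·) C) {B : Set 𝒴}
    (hBC : B ⊆ C) (hB : OrderDenseIn (φ '' B) (φ '' C)) : OrderDenseIn B C := by
  intro c hc c' hc' hlt
  obtain ⟨_, ⟨b, hb, rfl⟩, hcb, hbc'⟩ :=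
    hB _ (mem_image_of_mem φ hc) _ (mem_image_of_mem φ hc') (hφ hlt)
  exact ⟨b, hb, hC.le_of_strictMono_of_apply_le hφ hc (hBC hb) hcb,
    hC.le_of_strictMono_of_apply_le hφ (hBC hb) hc' hbc'⟩

/-- If there is a strictly increasing function from a partially ordered set `𝒴` to `ℝ`, then
`𝒴` is chain-separable: for each chain `C ⊆ 𝒴` there is a countable set `B ⊆ 𝒴` that is
order-dense in `C` (for any `c < c'` in `C` there is `b ∈ B` with `c ≤ b ≤ c'`). -/
theorem chainSeparable_of_strictMono_to_real
    {𝒴 : Type*} [PartialOrder 𝒴] (φ : 𝒴 → ℝ) (hφ : StrictMono φ) :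
    ∀ C : Set 𝒴, IsChain (· ≤ ·) C → ∃ B : Set 𝒴, B.Countable ∧
      ∀ c ∈ C, ∀ c' ∈ C, c < c' → ∃ b ∈ B, c ≤ b ∧ b ≤ c' := by
  intro C hC
  obtain ⟨D, hDC, hDc, hD⟩ := (φ '' C).exists_countable_subset_orderDenseIn
  obtain ⟨B, hBC, rfl⟩ := subset_image_iff.1 hDC
  exact ⟨B, countable_of_injective_of_countable_image ((hC.injOn_of_strictMono hφ).mono hBC) hDc,
    hC.orderDenseIn_of_image hφ hBC hD⟩
end

section
/- Regularity of L¹ under the a.e. order: Let (Ω,ℱ,μ) be a measure space and let 𝒴 be the space of equivalence classes (modulo μ-a.e. equality) of μ-integrable functions Ω → ℝ, partially ordered by y ≤ y' iff y ≤ y' holds μ-almost everywhere. Then 𝒴 is order-dense-in-itself, countably chain-complete, and chain-separable. -/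
/-!
The integral `L¹(μ) → ℝ` is strictly monotone for the a.e. order, and on an a.e.-monotone
sequence the `L¹` distance is the difference of the integrals. Hence a countable set bounded above
has increasing partial suprema that are Cauchy in `L¹`, and their limit is the supremum because the
order of `L¹` is closed. Strict monotonicity also makes every chain order-isomorphic to a subset of
`ℝ`, where rational intervals and the countably many gaps give a countable order-dense subset.
Density in itself holds in any ordered vector space: take the midpoint.
-/

open MeasureTheory Set

def IsOrderDenseIn {α : Type*} [Preorder α] (B C : Set α) : Prop :=
  ∀ c ∈ C, ∀ c' ∈ C, c < c' → ∃ b ∈ B, c ≤ b ∧ b ≤ c'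

theorem Real.exists_countable_subset_isOrderDenseIn (S : Set ℝ) :
    ∃ T ⊆ S, T.Countable ∧ IsOrderDenseIn T S := by
  let I := {q : ℚ × ℚ // (S ∩ Ioo (q.1 : ℝ) q.2).Nonempty}
  let picks : Set ℝ := range fun i : I => i.2.some
  let gapStarts : Set ℝ := {s ∈ S | ∃ q : ℚ, s < q ∧ ∀ x ∈ S, s < x → (q : ℝ) < x}
  have hgaps : gapStarts.Countable := by
    choose f hlt hgap using fun s : gapStarts => s.2.2
    refine countable_coe_iff.1 (Function.Injective.countable (f := f) fun s t hst => ?_)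
    -- gap starts `s < t` sharing the rational `q` would give `q < t < q`
    by_contra hne
    rcases lt_or_gt_of_ne (Subtype.coe_injective.ne hne) with h | h
    · exact (hgap s t t.2.1 h).not_gt (hst ▸ hlt t)
    · exact (hgap t s s.2.1 h).not_gt (hst ▸ hlt s)
  refine ⟨picks ∪ gapStarts, union_subset (range_subset_iff.2 fun i => i.2.some_mem.1)
    (fun _ h => h.1), (countable_range _).union hgaps, ?_⟩
  intro s hs s' hs' hlt
  by_cases hmid : ∃ x ∈ S, s < x ∧ x < s'
  · obtain ⟨x, hx, hsx, hxs'⟩ := hmid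
    obtain ⟨q, hsq, hqx⟩ := exists_rat_btwn hsx
    obtain ⟨q', hxq', hq's'⟩ := exists_rat_btwn hxs'
    let i : I := ⟨(q, q'), x, hx, hqx, hxq'⟩
    exact ⟨i.2.some, .inl ⟨i, rfl⟩, hsq.le.trans i.2.some_mem.2.1.le,
      i.2.some_mem.2.2.le.trans hq's'.le⟩
  · push Not at hmid
    obtain ⟨q, hsq, hqs'⟩ := exists_rat_btwn hlt
    exact ⟨s, .inr ⟨hs, q, hsq, fun x hx hsx => hqs'.trans_le (hmid x hx hsx)⟩, le_rfl, hlt.le⟩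

theorem IsChain.le_of_strictMono_le {α β : Type*} [PartialOrder α] [Preorder β] {C : Set α}
    (hC : IsChain (· ≤ ·) C) {φ : α → β} (hφ : StrictMono φ) {a b : α} (ha : a ∈ C) (hb : b ∈ C)
    (h : φ a ≤ φ b) : a ≤ b := by
  rcases hC.total ha hb with hab | hba
  · exact hab
  · rcases hba.lt_or_eq with hlt | heq
    · exact absurd (hφ hlt) h.not_gt
    · exact heq.ge

theorem IsChain.exists_countable_subset_isOrderDenseIn {α : Type*} [PartialOrder α] {C : Set α}
    (hC : IsChain (· ≤ ·) C) {φ : α → ℝ} (hφ : StrictMono φ) :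
    ∃ B ⊆ C, B.Countable ∧ IsOrderDenseIn B C := by
  obtain ⟨T, hTC, hTcount, hT⟩ := Real.exists_countable_subset_isOrderDenseIn (φ '' C)
  have hinj : InjOn φ C := fun a ha b hb hab =>
    le_antisymm (hC.le_of_strictMono_le hφ ha hb hab.le) (hC.le_of_strictMono_le hφ hb ha hab.ge)
  refine ⟨C ∩ φ ⁻¹' T, inter_subset_left, ?_, ?_⟩
  · exact MapsTo.countable_of_injOn (f := φ) (fun _ hx => hx.2) (hinj.mono inter_subset_left)
      hTcount
  · intro c hc c' hc' hlt
    obtain ⟨_, ht, hct, htc'⟩ := hT _ (mem_image_of_mem φ hc) _ (mem_image_of_mem φ hc') (hφ hlt)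
    obtain ⟨b, hb, rfl⟩ := hTC ht
    exact ⟨b, ⟨hb, ht⟩, hC.le_of_strictMono_le hφ hc hb hct, hC.le_of_strictMono_le hφ hb hc' htc'⟩

theorem DenselyOrdered.of_posSMulStrictMono (k : Type*) {G : Type*} [Field k] [LinearOrder k]
    [IsStrictOrderedRing k] [AddCommGroup G] [PartialOrder G] [IsOrderedAddMonoid G] [Module k G]
    [PosSMulStrictMono k G] : DenselyOrdered G where
  dense a a' h := by
    have hhalf : 0 < (2⁻¹ : k) • (a' - a) := smul_pos (by norm_num) (sub_pos.2 h)
    refine ⟨a + (2⁻¹ : k) • (a' - a), lt_add_of_pos_right a hhalf, ?_⟩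
    have : a' - (a + (2⁻¹ : k) • (a' - a)) = (2⁻¹ : k) • (a' - a) := by module
    exact sub_pos.1 (by rwa [this])

namespace MeasureTheory.Lp

variable {Ω E : Type*} [MeasurableSpace Ω] {μ : Measure Ω} {p : ENNReal}
  [NormedAddCommGroup E] [PartialOrder E] [NormedSpace ℝ E]

instance instPosSMulMono [PosSMulMono ℝ E] : PosSMulMono ℝ (Lp E p μ) where
  smul_le_smul_of_nonneg_left c hc f g hfg := by
    rw [← Lp.coeFn_le] at hfg ⊢
    filter_upwards [Lp.coeFn_smul c f, Lp.coeFn_smul c g, hfg] with ω hf hg hle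
    rw [hf, hg]
    exact smul_le_smul_of_nonneg_left hle hc

instance instPosSMulStrictMono [PosSMulMono ℝ E] : PosSMulStrictMono ℝ (Lp E p μ) :=
  PosSMulMono.toPosSMulStrictMono

instance instDenselyOrdered [IsOrderedAddMonoid E] [PosSMulMono ℝ E] :
    DenselyOrdered (Lp E p μ) :=
  DenselyOrdered.of_posSMulStrictMono ℝ

end MeasureTheory.Lp

namespace MeasureTheory.L1

variable {Ω : Type*} [MeasurableSpace Ω] {μ : Measure Ω}

theorem norm_eq_integral_of_nonneg {f : Lp ℝ 1 μ} (hf : 0 ≤ f) : ‖f‖ = integral f := by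
  rw [norm_eq_integral_norm, integral_eq_integral]
  refine integral_congr_ae ?_
  filter_upwards [(Lp.coeFn_nonneg f).2 hf] with ω hω
  exact Real.norm_of_nonneg hω

theorem dist_eq_integral_sub_of_le {f g : Lp ℝ 1 μ} (h : f ≤ g) :
    dist f g = integral g - integral f := by
  rw [dist_comm, dist_eq_norm, norm_eq_integral_of_nonneg (sub_nonneg.2 h), integral_sub]

theorem integral_strictMono : StrictMono (integral : Lp ℝ 1 μ → ℝ) := fun f g h => by
  have := dist_pos.2 h.ne
  rw [dist_eq_integral_sub_of_le h.le] at this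
  linarith

theorem cauchySeq_of_monotone_of_bddAbove {ι : Type*} [SemilatticeSup ι] [Nonempty ι]
    {d : ι → Lp ℝ 1 μ} (hd : Monotone d) (hbdd : BddAbove (range d)) : CauchySeq d := by
  have hr : Monotone (integral ∘ d) := integral_strictMono.monotone.comp hd
  have hr_cauchy : CauchySeq (integral ∘ d) :=
    (tendsto_atTop_ciSup hr (by
      rw [range_comp]; exact integral_strictMono.monotone.map_bddAbove hbdd)).cauchySeq
  have hdist : ∀ n N, N ≤ n → dist (d n) (d N) = dist (integral (d n)) (integral (d N)) :=
    fun n N hN => by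
      rw [dist_comm, dist_eq_integral_sub_of_le (hd hN), Real.dist_eq,
        abs_of_nonneg (sub_nonneg.2 (integral_strictMono.monotone (hd hN)))]
  rw [Metric.cauchySeq_iff'] at hr_cauchy ⊢
  intro ε hε
  obtain ⟨N, hN⟩ := hr_cauchy ε hε
  exact ⟨N, fun n hn => (hdist n N hn).trans_lt (hN n hn)⟩

theorem exists_isLUB_of_countable {C : Set (Lp ℝ 1 μ)} (hC : C.Countable) (hne : C.Nonempty)
    (hbdd : BddAbove C) : ∃ s, IsLUB C s := by
  obtain ⟨e, rfl⟩ := hC.exists_eq_range hne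
  have hd : Monotone (partialSups e) := (partialSups e).monotone
  obtain ⟨s, hs⟩ := cauchySeq_tendsto_of_complete
    (cauchySeq_of_monotone_of_bddAbove hd (bddAbove_range_partialSups.2 hbdd))
  have := isLUB_of_tendsto_atTop hd hs
  rw [IsLUB, upperBounds_range_partialSups] at this
  exact ⟨s, this⟩

theorem exists_isGLB_of_countable {C : Set (Lp ℝ 1 μ)} (hC : C.Countable) (hne : C.Nonempty)
    (hbdd : BddBelow C) : ∃ i, IsGLB C i := by
  obtain ⟨s, hs⟩ := exists_isLUB_of_countable (C := -C) (by simpa using hC.image Neg.neg)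
    hne.neg (bddAbove_neg.2 hbdd)
  exact ⟨-s, isLUB_neg.1 hs⟩

end MeasureTheory.L1

/-- **Regularity of `L¹` under the a.e. order.** Let `(Ω,ℱ,μ)` be a measure space and `𝒴` the
space of equivalence classes (modulo `μ`-a.e. equality) of `μ`-integrable functions `Ω → ℝ`,
partially ordered by `y ≤ y'` iff `y ≤ y'` `μ`-a.e. (this is the order on `Lp ℝ 1 μ` in
Mathlib). Then `𝒴` is order-dense-in-itself, countably chain-complete, and chain-separable. -/
theorem L1_ae_order_regular
    {Ω : Type*} [MeasurableSpace Ω] (μ : Measure Ω) :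
    (∀ a a' : Lp ℝ 1 μ, a < a' → ∃ b : Lp ℝ 1 μ, a < b ∧ b < a') ∧
    (∀ C : Set (Lp ℝ 1 μ), IsChain (· ≤ ·) C → C.Countable → C.Nonempty →
      (BddBelow C → ∃ i : Lp ℝ 1 μ, IsGLB C i) ∧
      (BddAbove C → ∃ s : Lp ℝ 1 μ, IsLUB C s)) ∧
    (∀ C : Set (Lp ℝ 1 μ), IsChain (· ≤ ·) C → ∃ B : Set (Lp ℝ 1 μ), B.Countable ∧
      ∀ c ∈ C, ∀ c' ∈ C, c < c' → ∃ b ∈ B, c ≤ b ∧ b ≤ c') := by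
  refine ⟨fun _ _ h => exists_between h,
    fun _ _ hC hne => ⟨L1.exists_isGLB_of_countable hC hne, L1.exists_isLUB_of_countable hC hne⟩,
    fun _ hC => ?_⟩
  obtain ⟨B, -, hB, hdense⟩ := hC.exists_countable_subset_isOrderDenseIn L1.integral_strictMono
  exact ⟨B, hB, hdense⟩
end

section
/- Density of differences of convex functions: Let Ω be a nonempty finite set. For any continuous function c : Δ(Ω) → ℝ and any ε > 0, there exist continuous convex functions w⁺, w⁻ : Δ(Ω) → ℝ such that, with w := w⁺ − w⁻, sup_{μ ∈ Δ(Ω)} |c(μ) − w(μ)| < ε. -/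
/-!
Stone–Weierstrass. On a compact convex set the differences of continuous convex functions form
a subalgebra of the continuous functions: sums, negatives and scalar multiples are clear, and
products reduce by polarization, `f * g = ((f + g)² - (f - g)²) / 4`, to squares. A square is
again a difference of convex functions because, after shifting by a constant, `f = p - m` with
`p, m ≥ 0` convex, and then `f² = 2p² + 2m² - (p + m)²` with all three squares convex.
Continuous linear functionals lie in this subalgebra, and they separate points.
-/

open Set

section DifferenceOfConvex

variable {E : Type*} [AddCommGroup E] [Module ℝ E] [TopologicalSpace E] {s : Set E}

def IsDCOn (s : Set E) (f : E → ℝ) : Prop :=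
  ∃ p m : E → ℝ,
    ContinuousOn p s ∧ ConvexOn ℝ s p ∧
    ContinuousOn m s ∧ ConvexOn ℝ s m ∧
    ∀ x ∈ s, f x = p x - m x

namespace IsDCOn

lemma const (hs : Convex ℝ s) (r : ℝ) : IsDCOn s (fun _ => r) :=
  ⟨fun _ => r, 0, continuousOn_const, convexOn_const r hs, continuousOn_const,
    convexOn_const 0 hs, fun _ _ => (sub_zero r).symm⟩

lemma add {f g : E → ℝ} (hf : IsDCOn s f) (hg : IsDCOn s g) : IsDCOn s (f + g) := by
  obtain ⟨p, m, hpc, hp, hmc, hm, hfpm⟩ := hf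
  obtain ⟨p', m', hpc', hp', hmc', hm', hgpm⟩ := hg
  refine ⟨p + p', m + m', hpc.add hpc', hp.add hp', hmc.add hmc', hm.add hm', fun x hx => ?_⟩
  simp only [Pi.add_apply, hfpm x hx, hgpm x hx]
  ring

lemma neg {f : E → ℝ} (hf : IsDCOn s f) : IsDCOn s (-f) := by
  obtain ⟨p, m, hpc, hp, hmc, hm, hfpm⟩ := hf
  exact ⟨m, p, hmc, hm, hpc, hp, fun x hx => by simp [hfpm x hx]⟩

lemma sub {f g : E → ℝ} (hf : IsDCOn s f) (hg : IsDCOn s g) : IsDCOn s (f - g) :=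
  sub_eq_add_neg f g ▸ hf.add hg.neg

lemma const_smul_of_nonneg {f : E → ℝ} (hf : IsDCOn s f) {r : ℝ} (hr : 0 ≤ r) :
    IsDCOn s (r • f) := by
  obtain ⟨p, m, hpc, hp, hmc, hm, hfpm⟩ := hf
  refine ⟨r • p, r • m, hpc.const_smul r, hp.smul hr, hmc.const_smul r, hm.smul hr,
    fun x hx => ?_⟩
  simp only [Pi.smul_apply, smul_eq_mul, hfpm x hx]
  ring

lemma const_smul {f : E → ℝ} (hf : IsDCOn s f) (r : ℝ) : IsDCOn s (r • f) := by
  rcases le_total 0 r with hr | hr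
  · exact hf.const_smul_of_nonneg hr
  · simpa using hf.neg.const_smul_of_nonneg (neg_nonneg.2 hr)

lemma exists_nonneg (hcs : IsCompact s) {f : E → ℝ} (hf : IsDCOn s f) :
    ∃ p m : E → ℝ,
      ContinuousOn p s ∧ ConvexOn ℝ s p ∧ (∀ x ∈ s, 0 ≤ p x) ∧
      ContinuousOn m s ∧ ConvexOn ℝ s m ∧ (∀ x ∈ s, 0 ≤ m x) ∧
      ∀ x ∈ s, f x = p x - m x := by
  obtain ⟨p, m, hpc, hp, hmc, hm, hfpm⟩ := hf
  obtain ⟨a, ha⟩ := hcs.bddBelow_image hpc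
  obtain ⟨b, hb⟩ := hcs.bddBelow_image hmc
  refine ⟨fun x => p x + max (-a) (-b), fun x => m x + max (-a) (-b),
    hpc.add continuousOn_const, hp.add_const _, fun x hx => ?_, hmc.add continuousOn_const,
    hm.add_const _, fun x hx => ?_, fun x hx => by simp only [hfpm x hx]; ring⟩
  · linarith [ha (mem_image_of_mem p hx), le_max_left (-a) (-b)]
  · linarith [hb (mem_image_of_mem m hx), le_max_right (-a) (-b)]

lemma sq (hcs : IsCompact s) {f : E → ℝ} (hf : IsDCOn s f) : IsDCOn s (f ^ 2) := by
  obtain ⟨p, m, hpc, hp, hp₀, hmc, hm, hm₀, hfpm⟩ := hf.exists_nonneg hcs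
  have hpm₀ : ∀ x ∈ s, 0 ≤ (p + m) x := fun x hx => add_nonneg (hp₀ x hx) (hm₀ x hx)
  refine ⟨2 • (p ^ 2 + m ^ 2), (p + m) ^ 2, ((hpc.pow 2).add (hmc.pow 2)).const_smul 2,
    ((hp.pow (fun x hx => hp₀ x hx) 2).add (hm.pow (fun x hx => hm₀ x hx) 2)).smul
      zero_le_two,
    (hpc.add hmc).pow 2, (hp.add hm).pow (fun x hx => hpm₀ x hx) 2, fun x hx => ?_⟩
  simp only [Pi.pow_apply, Pi.add_apply, Pi.smul_apply, hfpm x hx]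
  ring

lemma mul (hcs : IsCompact s) {f g : E → ℝ} (hf : IsDCOn s f) (hg : IsDCOn s g) :
    IsDCOn s (f * g) := by
  have hpolar : f * g = (4⁻¹ : ℝ) • ((f + g) ^ 2 - (f - g) ^ 2) := by
    ext x
    simp only [Pi.mul_apply, Pi.smul_apply, Pi.sub_apply, Pi.pow_apply, Pi.add_apply,
      smul_eq_mul]
    ring
  rw [hpolar]
  exact (((hf.add hg).sq hcs).sub ((hf.sub hg).sq hcs)).const_smul _

end IsDCOn

lemma ContinuousLinearMap.isDCOn (ℓ : E →L[ℝ] ℝ) (hs : Convex ℝ s) : IsDCOn s ℓ :=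
  ⟨ℓ, 0, ℓ.continuous.continuousOn, (ℓ : E →ₗ[ℝ] ℝ).convexOn hs, continuousOn_const,
    convexOn_const 0 hs, fun _ _ => (sub_zero _).symm⟩

def dcSubalgebra (hs : Convex ℝ s) (hcs : IsCompact s) : Subalgebra ℝ C(s, ℝ) where
  carrier := {f | ∃ F : E → ℝ, IsDCOn s F ∧ ∀ x : s, f x = F x}
  mul_mem' := by
    rintro f g ⟨F, hF, hfF⟩ ⟨G, hG, hgG⟩
    exact ⟨F * G, hF.mul hcs hG, fun x => by simp [hfF x, hgG x]⟩
  add_mem' := by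
    rintro f g ⟨F, hF, hfF⟩ ⟨G, hG, hgG⟩
    exact ⟨F + G, hF.add hG, fun x => by simp [hfF x, hgG x]⟩
  algebraMap_mem' r := ⟨fun _ => r, IsDCOn.const hs r, fun _ => rfl⟩

lemma dcSubalgebra_separatesPoints [SeparatingDual ℝ E] (hs : Convex ℝ s) (hcs : IsCompact s) :
    (dcSubalgebra hs hcs).SeparatesPoints := by
  intro x y hxy
  obtain ⟨ℓ, hℓ⟩ := SeparatingDual.exists_separating_of_ne (R := ℝ) (Subtype.coe_ne_coe.2 hxy)
  exact ⟨_, ⟨⟨fun z : s => ℓ z, by fun_prop⟩, ⟨ℓ, ℓ.isDCOn hs, fun _ => rfl⟩, rfl⟩, hℓ⟩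

theorem exists_isDCOn_abs_sub_lt [SeparatingDual ℝ E] (hs : Convex ℝ s) (hcs : IsCompact s)
    {c : E → ℝ} (hc : ContinuousOn c s) {ε : ℝ} (hε : 0 < ε) :
    ∃ F : E → ℝ, IsDCOn s F ∧ ∀ x ∈ s, |c x - F x| < ε := by
  have : CompactSpace s := isCompact_iff_compactSpace.mp hcs
  obtain ⟨⟨f, F, hF, hfF⟩, hf⟩ :=
    ContinuousMap.exists_mem_subalgebra_near_continuous_of_separatesPoints _
      (dcSubalgebra_separatesPoints hs hcs) (s.domRestrict c) hc.domRestrict ε hε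
  refine ⟨F, hF, fun x hx => ?_⟩
  simpa [hfF, abs_sub_comm, Real.norm_eq_abs, Set.domRestrict] using hf ⟨x, hx⟩

end DifferenceOfConvex

theorem diff_of_convex_dense_general
    {Ω : Type*} [Fintype Ω]
    (c : (Ω → ℝ) → ℝ) (hc : ContinuousOn c (stdSimplex ℝ Ω))
    (ε : ℝ) (hε : 0 < ε) :
    ∃ wp wm : (Ω → ℝ) → ℝ,
      ContinuousOn wp (stdSimplex ℝ Ω) ∧ ConvexOn ℝ (stdSimplex ℝ Ω) wp ∧
      ContinuousOn wm (stdSimplex ℝ Ω) ∧ ConvexOn ℝ (stdSimplex ℝ Ω) wm ∧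
      ∀ μ ∈ stdSimplex ℝ Ω, |c μ - (wp μ - wm μ)| < ε := by
  obtain ⟨F, ⟨wp, wm, hwpc, hwp, hwmc, hwm, hF⟩, hcF⟩ :=
    exists_isDCOn_abs_sub_lt (convex_stdSimplex ℝ Ω) (isCompact_stdSimplex ℝ Ω) hc hε
  exact ⟨wp, wm, hwpc, hwp, hwmc, hwm, fun μ hμ => hF μ hμ ▸ hcF μ hμ⟩

/-- **Density of differences of convex functions.** Let `Ω` be a nonempty finite set. For any
continuous `c : Δ(Ω) → ℝ` and any `ε > 0`, there are continuous convex functions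
`w⁺, w⁻ : Δ(Ω) → ℝ` such that `w := w⁺ − w⁻` satisfies `sup_{μ ∈ Δ(Ω)} |c μ − w μ| < ε`. -/
theorem diff_of_convex_dense
    {Ω : Type*} [Fintype Ω] [Nonempty Ω]
    (c : (Ω → ℝ) → ℝ) (hc : ContinuousOn c (stdSimplex ℝ Ω))
    (ε : ℝ) (hε : 0 < ε) :
    ∃ wp wm : (Ω → ℝ) → ℝ,
      ContinuousOn wp (stdSimplex ℝ Ω) ∧ ConvexOn ℝ (stdSimplex ℝ Ω) wp ∧
      ContinuousOn wm (stdSimplex ℝ Ω) ∧ ConvexOn ℝ (stdSimplex ℝ Ω) wm ∧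
      ∀ μ ∈ stdSimplex ℝ Ω, |c μ - (wp μ - wm μ)| < ε :=
  diff_of_convex_dense_general c hc ε hε
end
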